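/- arXiv:2105.06415 — 13 statements merged into one kernel-verified Lean document; each statement's English description precedes it below -/
import Mathlib

section
/- Let α, β be nonzero real constants, let c : ℝ → ℝ be smooth with antiderivative C (C' = c), and let h₁, h₀ : ℝ → ℝ be smooth. Define the forcing h(x,t) = h₁(x − C(t)) − β c(t)(x − C(t)) + h₀(t). If u : ℝ×ℝ → ℝ is a smooth solution of the forced Ostrovsky equation ∂x(u_t + u u_x + α u_xxx) = β u + ∂x h, then for every ε ∈ ℝ the function ũ(x,t) := u(x − C(t) + C(t−ε), t−ε) + c(t) − c(t−ε) is also a smooth solution of the same equation (with the same forcing h). Thus the time-dependent Galilean boost generated by X₁ = ∂t + c(t)∂x + c'(t)∂u maps solutions to solutions. -/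
/-- Partial derivative with respect to the first (space) variable. -/
noncomputable def px (u : ℝ → ℝ → ℝ) : ℝ → ℝ → ℝ := fun x t => deriv (fun y => u y t) x

/-- Partial derivative with respect to the second (time) variable. -/
noncomputable def pt (u : ℝ → ℝ → ℝ) : ℝ → ℝ → ℝ := fun x t => deriv (fun s => u x s) t

/-- Smoothness of a function of two real variables. -/
def Smooth2 (u : ℝ → ℝ → ℝ) : Prop := ContDiff ℝ (⊤ : ℕ∞) (fun p : ℝ × ℝ => u p.1 p.2)

/-- `u` solves the forced Ostrovsky equation `∂x(u_t + u u_x + α u_xxx) = β u + ∂x h`. -/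
def SolvesForcedOstrovsky (α β : ℝ) (h u : ℝ → ℝ → ℝ) : Prop :=
  ∀ x t : ℝ,
    px (fun x t => pt u x t + u x t * px u x t + α * px (px (px u)) x t) x t
      = β * u x t + px h x t

open scoped ContDiff ENNReal NNReal

theorem primitive_contDiff_top {c C : ℝ → ℝ} (hc : ContDiff ℝ (⊤ : ℕ∞) c)
    (hC : ∀ t : ℝ, HasDerivAt C (c t) t) : ContDiff ℝ (⊤ : ℕ∞) C := by
  have hd : deriv C = c := funext fun t => (hC t).deriv
  rw [contDiff_infty_iff_deriv]
  exact ⟨fun t => (hC t).differentiableAt, hd ▸ hc⟩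

/-- The time-dependent Galilean boost generated by `X₁ = ∂t + c(t)∂x + c'(t)∂u`
maps smooth solutions of the forced Ostrovsky equation (with travelling forcing
`h = h₁(x − C(t)) − β c(t)(x − C(t)) + h₀(t)`) to smooth solutions. -/
theorem galilean_boost_maps_solutions_to_solutions
    (α β : ℝ) (hα : α ≠ 0) (hβ : β ≠ 0)
    (c C h₁ h₀ : ℝ → ℝ)
    (hc : ContDiff ℝ (⊤ : ℕ∞) c) (hC : ∀ t : ℝ, HasDerivAt C (c t) t)
    (hh₁ : ContDiff ℝ (⊤ : ℕ∞) h₁) (hh₀ : ContDiff ℝ (⊤ : ℕ∞) h₀)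
    (h : ℝ → ℝ → ℝ)
    (hdef : ∀ x t : ℝ, h x t = h₁ (x - C t) - β * c t * (x - C t) + h₀ t)
    (u : ℝ → ℝ → ℝ) (hu : Smooth2 u)
    (hsol : SolvesForcedOstrovsky α β h u)
    (ε : ℝ) :
    Smooth2 (fun x t => u (x - C t + C (t - ε)) (t - ε) + c t - c (t - ε)) ∧
    SolvesForcedOstrovsky α β h
      (fun x t => u (x - C t + C (t - ε)) (t - ε) + c t - c (t - ε)) := by
  have hCsm : ContDiff ℝ (⊤ : ℕ∞) C := primitive_contDiff_top hc hC
  set v : ℝ → ℝ → ℝ := fun x t => u (x - C t + C (t - ε)) (t - ε) + c t - c (t - ε) with hv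
  have hUdiff : Differentiable ℝ (fun p : ℝ × ℝ => u p.1 p.2) := hu.differentiable (by simp)
  have hcd : Differentiable ℝ c := hc.differentiable (by simp)
  have hh₁d : Differentiable ℝ h₁ := hh₁.differentiable (by simp)
  -- smoothness of v
  have hsmooth : Smooth2 v := by
    have h1 : ContDiff ℝ (⊤ : ℕ∞) (fun p : ℝ × ℝ => (p.1 - C p.2 + C (p.2 - ε), p.2 - ε)) :=
      ((contDiff_fst.sub (hCsm.comp contDiff_snd)).add
        (hCsm.comp (contDiff_snd.sub contDiff_const))).prodMk
        (contDiff_snd.sub contDiff_const)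
    exact ((hu.comp h1).add (hc.comp contDiff_snd)).sub
      (hc.comp (contDiff_snd.sub contDiff_const))
  refine ⟨hsmooth, ?_⟩
  set g : ℝ → ℝ := fun t => C t - C (t - ε) with hg
  -- first spatial derivative of v
  have hpxv : ∀ x t : ℝ, px v x t = px u (x - g t) (t - ε) := by
    intro x t
    show deriv (fun y => v y t) x = px u (x - g t) (t - ε)
    have e1 : (fun y => v y t) = fun y => u (y - g t) (t - ε) + (c t - c (t - ε)) := by
      funext y
      have e : y - C t + C (t - ε) = y - g t := by simp only [hg]; ring
      simp only [hv, e]; ring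
    rw [e1]
    rw [deriv_add_const]
    exact deriv_comp_sub_const (fun z => u z (t - ε)) (g t) x
  have hpxxv : ∀ x t : ℝ, px (px v) x t = px (px u) (x - g t) (t - ε) := by
    intro x t
    show deriv (fun y => px v y t) x = px (px u) (x - g t) (t - ε)
    have e1 : (fun y => px v y t) = fun y => px u (y - g t) (t - ε) :=
      funext fun y => hpxv y t
    rw [e1]
    exact deriv_comp_sub_const (fun z => px u z (t - ε)) (g t) x
  have hpx3v : ∀ x t : ℝ, px (px (px v)) x t = px (px (px u)) (x - g t) (t - ε) := by
    intro x t
    show deriv (fun y => px (px v) y t) x = px (px (px u)) (x - g t) (t - ε)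
    have e1 : (fun y => px (px v) y t) = fun y => px (px u) (y - g t) (t - ε) :=
      funext fun y => hpxxv y t
    rw [e1]
    exact deriv_comp_sub_const (fun z => px (px u) z (t - ε)) (g t) x
  -- fderiv of u and the partial derivatives
  have hfd : ∀ X T : ℝ,
      px u X T = fderiv ℝ (fun p : ℝ × ℝ => u p.1 p.2) (X, T) (1, 0) ∧
      pt u X T = fderiv ℝ (fun p : ℝ × ℝ => u p.1 p.2) (X, T) (0, 1) := by
    intro X T
    have hU : HasFDerivAt (fun p : ℝ × ℝ => u p.1 p.2)
        (fderiv ℝ (fun p : ℝ × ℝ => u p.1 p.2) (X, T)) (X, T) :=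
      (hUdiff (X, T)).hasFDerivAt
    constructor
    · have hx : HasDerivAt (fun y => u y T)
          (fderiv ℝ (fun p : ℝ × ℝ => u p.1 p.2) (X, T) (1, 0)) X :=
        by have := hU.comp_hasDerivAt X ((hasDerivAt_id X).prodMk (hasDerivAt_const X T)); exact this
      exact hx.deriv
    · have ht : HasDerivAt (fun s => u X s)
          (fderiv ℝ (fun p : ℝ × ℝ => u p.1 p.2) (X, T) (0, 1)) T :=
        by have := hU.comp_hasDerivAt T ((hasDerivAt_const T X).prodMk (hasDerivAt_id T)); exact this
      exact ht.deriv
  -- time derivative of v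
  have hptv : ∀ x t : ℝ, pt v x t
      = (c (t - ε) - c t) * px u (x - g t) (t - ε) + pt u (x - g t) (t - ε)
        + deriv c t - deriv c (t - ε) := by
    intro x t
    have hXval : x - C t + C (t - ε) = x - g t := by simp only [hg]; ring
    have hU : HasFDerivAt (fun p : ℝ × ℝ => u p.1 p.2)
        (fderiv ℝ (fun p : ℝ × ℝ => u p.1 p.2) (x - g t, t - ε)) (x - g t, t - ε) :=
      (hUdiff (x - g t, t - ε)).hasFDerivAt
    have hU' : HasFDerivAt (fun p : ℝ × ℝ => u p.1 p.2)
        (fderiv ℝ (fun p : ℝ × ℝ => u p.1 p.2) (x - g t, t - ε))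
        (x - C t + C (t - ε), t - ε) := by rw [hXval]; exact hU
    have hφ : HasDerivAt (fun s => (x - C s + C (s - ε), s - ε)) (c (t - ε) - c t, 1) t := by
      have h1 : HasDerivAt (fun s => x - C s + C (s - ε)) (c (t - ε) - c t) t := by
        have ha : HasDerivAt (fun s => x - C s) (0 - c t) t :=
          (hasDerivAt_const t x).sub (hC t)
        have hb : HasDerivAt (fun s => C (s - ε)) (c (t - ε) * 1) t :=
          (hC (t - ε)).comp t ((hasDerivAt_id t).sub_const ε)
        have hab := ha.add hb
        have e : c (t - ε) - c t = 0 - c t + c (t - ε) * 1 := by ring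
        rw [e]; exact hab
      exact h1.prodMk ((hasDerivAt_id t).sub_const ε)
    have hcomp : HasDerivAt (fun s => u (x - C s + C (s - ε)) (s - ε))
        (fderiv ℝ (fun p : ℝ × ℝ => u p.1 p.2) (x - g t, t - ε) (c (t - ε) - c t, 1)) t :=
      by have := hU'.comp_hasDerivAt t hφ; exact this
    have hc1 : HasDerivAt c (deriv c t) t := (hcd t).hasDerivAt
    have hc2 : HasDerivAt (fun s => c (s - ε)) (deriv c (t - ε) * 1) t :=
      ((hcd (t - ε)).hasDerivAt).comp t ((hasDerivAt_id t).sub_const ε)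
    have hfull : HasDerivAt
        (fun s => u (x - C s + C (s - ε)) (s - ε) + c s - c (s - ε))
        (fderiv ℝ (fun p : ℝ × ℝ => u p.1 p.2) (x - g t, t - ε) (c (t - ε) - c t, 1)
          + deriv c t - deriv c (t - ε) * 1) t :=
      (hcomp.add hc1).sub hc2
    have hder : deriv (fun s => v x s) t
        = fderiv ℝ (fun p : ℝ × ℝ => u p.1 p.2) (x - g t, t - ε) (c (t - ε) - c t, 1)
          + deriv c t - deriv c (t - ε) * 1 := hfull.deriv
    have hlin : fderiv ℝ (fun p : ℝ × ℝ => u p.1 p.2) (x - g t, t - ε) (c (t - ε) - c t, 1)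
        = (c (t - ε) - c t) * px u (x - g t) (t - ε) + pt u (x - g t) (t - ε) := by
      obtain ⟨e1, e2⟩ := hfd (x - g t) (t - ε)
      have hvec : ((c (t - ε) - c t, (1 : ℝ)) : ℝ × ℝ)
          = (c (t - ε) - c t) • ((1 : ℝ), (0 : ℝ)) + ((0 : ℝ), (1 : ℝ)) := by
        simp
      rw [hvec, map_add, map_smul, ← e1, ← e2, smul_eq_mul]
    show deriv (fun s => v x s) t = _
    rw [hder, hlin]; ring
  -- derivative of h in x
  have hpxh : ∀ x t : ℝ, px h x t = deriv h₁ (x - C t) - β * c t := by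
    intro x t
    have e1 : (fun y => h y t)
        = fun y => h₁ (y - C t) - β * c t * (y - C t) + h₀ t := by
      funext y; rw [hdef]
    have hd : HasDerivAt (fun y => h₁ (y - C t) - β * c t * (y - C t) + h₀ t)
        (deriv h₁ (x - C t) * 1 - β * c t * 1) x := by
      have ha : HasDerivAt (fun y => h₁ (y - C t)) (deriv h₁ (x - C t) * 1) x :=
        ((hh₁d (x - C t)).hasDerivAt).comp x ((hasDerivAt_id x).sub_const (C t))
      have hb : HasDerivAt (fun y => β * c t * (y - C t)) (β * c t * 1) x :=
        ((hasDerivAt_id x).sub_const (C t)).const_mul (β * c t)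
      exact (ha.sub hb).add_const (h₀ t)
    show deriv (fun y => h y t) x = _
    rw [e1, hd.deriv]; ring
  -- main computation
  intro x t
  have hXval : x - C t + C (t - ε) = x - g t := by simp only [hg]; ring
  have hE : ∀ y : ℝ, pt v y t + v y t * px v y t + α * px (px (px v)) y t
      = (fun z => pt u z (t - ε) + u z (t - ε) * px u z (t - ε)
          + α * px (px (px u)) z (t - ε)) (y - g t)
        + (deriv c t - deriv c (t - ε)) := by
    intro y
    have hvy : v y t = u (y - g t) (t - ε) + c t - c (t - ε) := by
      have e : y - C t + C (t - ε) = y - g t := by simp only [hg]; ring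
      simp only [hv, e]
    rw [hptv y t, hvy, hpxv y t, hpx3v y t]
    ring
  show px (fun x t => pt v x t + v x t * px v x t + α * px (px (px v)) x t) x t
      = β * v x t + px h x t
  have e1 : (fun y => pt v y t + v y t * px v y t + α * px (px (px v)) y t)
      = fun y => (fun z => pt u z (t - ε) + u z (t - ε) * px u z (t - ε)
          + α * px (px (px u)) z (t - ε)) (y - g t)
        + (deriv c t - deriv c (t - ε)) := funext hE
  have lhs_eq : px (fun x t => pt v x t + v x t * px v x t + α * px (px (px v)) x t) x t
      = px (fun x t => pt u x t + u x t * px u x t + α * px (px (px u)) x t)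
          (x - g t) (t - ε) := by
    show deriv (fun y => pt v y t + v y t * px v y t + α * px (px (px v)) y t) x = _
    rw [e1, deriv_add_const]
    exact deriv_comp_sub_const
      (fun z => pt u z (t - ε) + u z (t - ε) * px u z (t - ε)
        + α * px (px (px u)) z (t - ε)) (g t) x
  rw [lhs_eq, hsol (x - g t) (t - ε), hpxh, hpxh]
  have hXCT : x - g t - C (t - ε) = x - C t := by simp only [hg]; ring
  have hvxt : v x t = u (x - g t) (t - ε) + c t - c (t - ε) := by
    simp only [hv, hXval]
  rw [hXCT, hvxt]
  ring
end

section
/- Let α be a real constant and β a nonzero real constant, and let h₂, h₁, h₀ : ℝ → ℝ be smooth. Define the quadratic forcing h(x,t) = h₂(t) x² + h₁(t) x + h₀(t), and let E(t) = exp(−(2/β)∫₀ᵗ h₂(s) ds). If u : ℝ×ℝ → ℝ is a smooth solution of the forced Ostrovsky equation ∂x(u_t + u u_x + α u_xxx) = β u + ∂x h, then for every ε ∈ ℝ the function ũ(x,t) := u(x − ε E(t), t) + ε E'(t) is also a smooth solution of the same equation. Thus the time-dependent reference-frame shift generated by X₂ = E(t)∂x + E'(t)∂u maps solutions to solutions.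 -/
namespace Aux

lemma diff_fst {u : ℝ → ℝ → ℝ} (hu : Smooth2 u) (t : ℝ) :
    Differentiable ℝ (fun y => u y t) := by
  have := (hu.differentiable (by simp))
  exact fun x => (this (x, t)).comp (f := fun y : ℝ => ((y, t) : ℝ × ℝ)) x ((differentiableAt_id.prodMk (differentiableAt_const t)))

lemma hasDerivAt_px {u : ℝ → ℝ → ℝ} (hu : Smooth2 u) (x t : ℝ) :
    HasDerivAt (fun y => u y t) (px u x t) x :=
  (diff_fst hu t x).hasDerivAt

lemma px_fderiv {u : ℝ → ℝ → ℝ} (hu : Smooth2 u) (x t : ℝ) :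
    px u x t = fderiv ℝ (fun p : ℝ × ℝ => u p.1 p.2) (x, t) (1, 0) := by
  have h1 : HasDerivAt (fun y => u y t)
      (fderiv ℝ (fun p : ℝ × ℝ => u p.1 p.2) (x, t) (1, 0)) x := by
    have hF := (hu.differentiable (by simp) (x, t)).hasFDerivAt
    have hg : HasDerivAt (fun y : ℝ => ((y, t) : ℝ × ℝ)) ((1 : ℝ), (0 : ℝ)) x :=
      (hasDerivAt_id x).prodMk (hasDerivAt_const x t)
    exact hF.comp_hasDerivAt x hg
  show deriv (fun y => u y t) x = _
  exact h1.deriv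

lemma pt_fderiv {u : ℝ → ℝ → ℝ} (hu : Smooth2 u) (x t : ℝ) :
    pt u x t = fderiv ℝ (fun p : ℝ × ℝ => u p.1 p.2) (x, t) (0, 1) := by
  have h1 : HasDerivAt (fun s => u x s)
      (fderiv ℝ (fun p : ℝ × ℝ => u p.1 p.2) (x, t) (0, 1)) t := by
    have hF := (hu.differentiable (by simp) (x, t)).hasFDerivAt
    have hg : HasDerivAt (fun s : ℝ => ((x, s) : ℝ × ℝ)) ((0 : ℝ), (1 : ℝ)) t :=
      (hasDerivAt_const t x).prodMk (hasDerivAt_id t)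
    exact hF.comp_hasDerivAt t hg
  show deriv (fun s => u x s) t = _
  exact h1.deriv

lemma smooth2_px {u : ℝ → ℝ → ℝ} (hu : Smooth2 u) : Smooth2 (px u) := by
  have : (fun p : ℝ × ℝ => px u p.1 p.2)
      = fun p : ℝ × ℝ => fderiv ℝ (fun q : ℝ × ℝ => u q.1 q.2) p ((1 : ℝ), (0 : ℝ)) := by
    funext p
    exact px_fderiv hu p.1 p.2
  rw [Smooth2, this]
  exact (hu.fderiv_right (by simp)).clm_apply contDiff_const

lemma smooth2_pt {u : ℝ → ℝ → ℝ} (hu : Smooth2 u) : Smooth2 (pt u) := by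
  have : (fun p : ℝ × ℝ => pt u p.1 p.2)
      = fun p : ℝ × ℝ => fderiv ℝ (fun q : ℝ × ℝ => u q.1 q.2) p ((0 : ℝ), (1 : ℝ)) := by
    funext p
    exact pt_fderiv hu p.1 p.2
  rw [Smooth2, this]
  exact (hu.fderiv_right (by simp)).clm_apply contDiff_const

lemma hasDerivAt_curve {u : ℝ → ℝ → ℝ} (hu : Smooth2 u) {c : ℝ → ℝ} {c' t : ℝ}
    (hc : HasDerivAt c c' t) :
    HasDerivAt (fun s => u (c s) s) (c' * px u (c t) t + pt u (c t) t) t := by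
  have hF := (hu.differentiable (by simp) (c t, t)).hasFDerivAt
  have hg : HasDerivAt (fun s : ℝ => ((c s, s) : ℝ × ℝ)) ((c', (1 : ℝ)) : ℝ × ℝ) t :=
    hc.prodMk (hasDerivAt_id t)
  have h1 : HasDerivAt ((fun p : ℝ × ℝ => u p.1 p.2) ∘ (fun s => ((c s, s) : ℝ × ℝ)))
      (fderiv ℝ (fun p : ℝ × ℝ => u p.1 p.2) (c t, t) ((c', 1) : ℝ × ℝ)) t :=
    HasFDerivAt.comp_hasDerivAt (f := fun s => ((c s, s) : ℝ × ℝ)) t hF hg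
  have h2 : fderiv ℝ (fun p : ℝ × ℝ => u p.1 p.2) (c t, t) ((c', 1) : ℝ × ℝ)
      = c' * px u (c t) t + pt u (c t) t := by
    have hv : ((c', 1) : ℝ × ℝ) = c' • ((1 : ℝ), (0 : ℝ)) + ((0 : ℝ), (1 : ℝ)) := by
      simp [Prod.ext_iff]
    rw [hv, map_add, map_smul, px_fderiv hu, pt_fderiv hu, smul_eq_mul]
  rw [← h2]
  exact h1

lemma deriv_shift {u : ℝ → ℝ → ℝ} (hu : Smooth2 u) (a t x : ℝ) :
    deriv (fun y => u (y - a) t) x = px u (x - a) t := by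
  have h1 : HasDerivAt (fun y : ℝ => y - a) 1 x := (hasDerivAt_id x).sub_const a
  have h2 := (hasDerivAt_px hu (x - a) t).comp x h1
  simpa [Function.comp_def] using h2.deriv

end Aux

namespace Aux

lemma deriv_shift_const {u : ℝ → ℝ → ℝ} (hu : Smooth2 u) (a C t x : ℝ) :
    deriv (fun y => u (y - a) t + C) x = px u (x - a) t := by
  have h1 : HasDerivAt (fun y : ℝ => y - a) 1 x := (hasDerivAt_id x).sub_const a
  have h2 := ((hasDerivAt_px hu (x - a) t).comp x h1).add_const C
  simpa using h2.deriv

end Aux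

/-- The time-dependent reference-frame shift generated by `X₂ = E(t)∂x + E'(t)∂u`,
where `E(t) = exp(−(2/β)∫₀ᵗ h₂(s) ds)`, maps smooth solutions of the forced Ostrovsky
equation with quadratic forcing `h = h₂(t)x² + h₁(t)x + h₀(t)` to smooth solutions. -/
theorem frame_shift_maps_solutions_to_solutions
    (α β : ℝ) (hβ : β ≠ 0)
    (h₂ h₁ h₀ : ℝ → ℝ)
    (hh₂ : ContDiff ℝ (⊤ : ℕ∞) h₂) (hh₁ : ContDiff ℝ (⊤ : ℕ∞) h₁) (hh₀ : ContDiff ℝ (⊤ : ℕ∞) h₀)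
    (h : ℝ → ℝ → ℝ)
    (hdef : ∀ x t : ℝ, h x t = h₂ t * x ^ 2 + h₁ t * x + h₀ t)
    (E : ℝ → ℝ)
    (hE : ∀ t : ℝ, E t = Real.exp (-(2 / β) * ∫ s in (0:ℝ)..t, h₂ s))
    (u : ℝ → ℝ → ℝ) (hu : Smooth2 u)
    (hsol : SolvesForcedOstrovsky α β h u)
    (ε : ℝ) :
    Smooth2 (fun x t => u (x - ε * E t) t + ε * deriv E t) ∧
    SolvesForcedOstrovsky α β h (fun x t => u (x - ε * E t) t + ε * deriv E t) := by
  -- properties of E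
  set Fint : ℝ → ℝ := fun t => ∫ s in (0:ℝ)..t, h₂ s with hFintdef
  have hFintD : ∀ t, HasDerivAt Fint (h₂ t) t := by
    intro t
    exact intervalIntegral.integral_hasDerivAt_right
      ((hh₂.continuous).intervalIntegrable 0 t)
      (hh₂.continuous.stronglyMeasurableAtFilter _ _)
      hh₂.continuous.continuousAt
  have hFintSmooth : ContDiff ℝ (⊤ : ℕ∞) Fint := by
    rw [contDiff_infty_iff_deriv]
    refine ⟨fun t => (hFintD t).differentiableAt, ?_⟩
    have hdF : deriv Fint = h₂ := funext fun t => (hFintD t).deriv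
    rw [hdF]; exact hh₂
  have hEfun : E = fun t => Real.exp (-(2 / β) * Fint t) := funext hE
  have hEsmooth : ContDiff ℝ (⊤ : ℕ∞) E := by
    rw [hEfun]; exact Real.contDiff_exp.comp (contDiff_const.mul hFintSmooth)
  have hED : ∀ t, HasDerivAt E (-(2 / β) * h₂ t * E t) t := by
    intro t
    have h1 : HasDerivAt (fun t => -(2 / β) * Fint t) (-(2 / β) * h₂ t) t :=
      (hFintD t).const_mul _
    have h2 := h1.exp
    rw [hEfun]
    convert h2 using 1
    show -(2 / β) * h₂ t * Real.exp (-(2 / β) * Fint t) = _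
    ring
  have hE' : ∀ t, deriv E t = -(2 / β) * h₂ t * E t := fun t => (hED t).deriv
  have hE'fun : deriv E = fun t => -(2 / β) * h₂ t * E t := funext hE'
  have hE'smooth : ContDiff ℝ (⊤ : ℕ∞) (deriv E) := by
    rw [hE'fun]; exact (contDiff_const.mul hh₂).mul hEsmooth
  -- smoothness of the shifted solution
  have hφ : ContDiff ℝ (⊤ : ℕ∞) (fun p : ℝ × ℝ => ((p.1 - ε * E p.2, p.2) : ℝ × ℝ)) :=
    (contDiff_fst.sub (contDiff_const.mul (hEsmooth.comp contDiff_snd))).prodMk contDiff_snd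
  have hvsmooth : Smooth2 (fun x t => u (x - ε * E t) t + ε * deriv E t) :=
    (hu.comp hφ).add (contDiff_const.mul (hE'smooth.comp contDiff_snd))
  refine ⟨hvsmooth, ?_⟩
  set v : ℝ → ℝ → ℝ := fun x t => u (x - ε * E t) t + ε * deriv E t with hv
  -- partial derivatives of v
  have hpxv : ∀ x t, px v x t = px u (x - ε * E t) t := by
    intro x t
    show deriv (fun y => u (y - ε * E t) t + ε * deriv E t) x = _
    exact Aux.deriv_shift_const hu _ _ t x
  have hpx2v : ∀ x t, px (px v) x t = px (px u) (x - ε * E t) t := by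
    intro x t
    show deriv (fun y => px v y t) x = _
    have he : (fun y => px v y t) = fun y => px u (y - ε * E t) t :=
      funext fun y => hpxv y t
    rw [he]
    exact Aux.deriv_shift (Aux.smooth2_px hu) _ t x
  have hpx3v : ∀ x t, px (px (px v)) x t = px (px (px u)) (x - ε * E t) t := by
    intro x t
    show deriv (fun y => px (px v) y t) x = _
    have he : (fun y => px (px v) y t) = fun y => px (px u) (y - ε * E t) t :=
      funext fun y => hpx2v y t
    rw [he]
    exact Aux.deriv_shift (Aux.smooth2_px (Aux.smooth2_px hu)) _ t x
  have hptv : ∀ x t, pt v x t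
      = -(ε * deriv E t) * px u (x - ε * E t) t + pt u (x - ε * E t) t
        + ε * deriv (deriv E) t := by
    intro x t
    have hcD : HasDerivAt (fun s => x - ε * E s) (-(ε * deriv E t)) t :=
      (((hEsmooth.differentiable (by simp) t).hasDerivAt).const_mul ε).const_sub x
    have h1 := Aux.hasDerivAt_curve hu hcD
    have h2 : HasDerivAt (fun s => ε * deriv E s) (ε * deriv (deriv E) t) t :=
      ((hE'smooth.differentiable (by simp) t).hasDerivAt).const_mul ε
    show deriv (fun s => u (x - ε * E s) s + ε * deriv E s) t = _
    exact (h1.add h2).deriv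
  -- smoothness of the inner expression for u
  have hIsmooth : Smooth2 (fun x t => pt u x t + u x t * px u x t
      + α * px (px (px u)) x t) :=
    ((Aux.smooth2_pt hu).add (hu.mul (Aux.smooth2_px hu))).add
      (contDiff_const.mul (Aux.smooth2_px (Aux.smooth2_px (Aux.smooth2_px hu))))
  -- the inner expression transforms by a pure shift plus constant
  have key : ∀ x t, pt v x t + v x t * px v x t + α * px (px (px v)) x t
      = (fun x t => pt u x t + u x t * px u x t + α * px (px (px u)) x t)
          (x - ε * E t) t + ε * deriv (deriv E) t := by
    intro x t
    have hvxt : v x t = u (x - ε * E t) t + ε * deriv E t := rfl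
    rw [hptv, hpxv, hpx3v, hvxt]
    ring
  -- px of the quadratic forcing
  have hpxh : ∀ x t, px h x t = 2 * h₂ t * x + h₁ t := by
    intro x t
    show deriv (fun y => h y t) x = _
    have hfun : (fun y => h y t) = fun y => h₂ t * y ^ 2 + h₁ t * y + h₀ t :=
      funext fun y => hdef y t
    rw [hfun]
    have hd : HasDerivAt (fun y : ℝ => h₂ t * y ^ 2 + h₁ t * y + h₀ t)
        (2 * h₂ t * x + h₁ t) x := by
      have p1 : HasDerivAt (fun y : ℝ => y ^ 2) (2 * x) x := by
        simpa using hasDerivAt_pow 2 x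
      have p2 := ((p1.const_mul (h₂ t)).add ((hasDerivAt_id x).const_mul (h₁ t))).add_const
        (h₀ t)
      refine p2.congr_deriv ?_
      ring
    exact hd.deriv
  intro x t
  have hgoal_lhs : px (fun x t => pt v x t + v x t * px v x t
        + α * px (px (px v)) x t) x t
      = px (fun x t => pt u x t + u x t * px u x t + α * px (px (px u)) x t)
          (x - ε * E t) t := by
    show deriv (fun y => pt v y t + v y t * px v y t + α * px (px (px v)) y t) x = _
    have he : (fun y => pt v y t + v y t * px v y t + α * px (px (px v)) y t)
        = fun y => (fun x t => pt u x t + u x t * px u x t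
            + α * px (px (px u)) x t) (y - ε * E t) t + ε * deriv (deriv E) t :=
      funext fun y => key y t
    rw [he]
    exact Aux.deriv_shift_const hIsmooth _ _ t x
  rw [hgoal_lhs, hsol (x - ε * E t) t, hpxh, hpxh]
  have hvxt : v x t = u (x - ε * E t) t + ε * deriv E t := rfl
  rw [hvxt, hE' t]
  field_simp
  ring
end

section
/- Let α, β be nonzero real constants, let c : ℝ → ℝ be smooth with antiderivative C, let h₁, h₀ : ℝ → ℝ be smooth, and set h(x,t) = h₁(x − C(t)) − β c(t)(x − C(t)) + h₀(t). Let V : ℝ → ℝ be smooth and define u(x,t) = V'(x − C(t)) + c(t). Then u is a solution of the forced Ostrovsky equation ∂x(u_t + u u_x + α u_xxx) = β u + ∂x h if and only if there is a constant k ∈ ℝ such that α V''''(ζ) + V'(ζ) V''(ζ) − β V(ζ) = h₁(ζ) + k for all ζ ∈ ℝ. In particular, if V satisfies the reduced ODE α V'''' + V' V'' − β V = h₁, then u = V'(χ) + c(t) with χ = x − C(t) is a generalized travelling wave solution whose profile is stationary in a frame moving with speed c(t). -/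
/-- Reduction under time-dependent Galilean boosts: `u = V'(x − C(t)) + c(t)` solves the
forced Ostrovsky equation with travelling forcing `h = h₁(x − C(t)) − β c(t)(x − C(t)) + h₀(t)`
iff `V` solves `α V'''' + V' V'' − β V = h₁ + k` for some constant `k`. -/
theorem galilean_reduction_iff
    (α β : ℝ) (hα : α ≠ 0) (hβ : β ≠ 0)
    (c C h₁ h₀ : ℝ → ℝ)
    (hc : ContDiff ℝ (⊤ : ℕ∞) c) (hC : ∀ t : ℝ, HasDerivAt C (c t) t)
    (hh₁ : ContDiff ℝ (⊤ : ℕ∞) h₁) (hh₀ : ContDiff ℝ (⊤ : ℕ∞) h₀)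
    (h : ℝ → ℝ → ℝ)
    (hdef : ∀ x t : ℝ, h x t = h₁ (x - C t) - β * c t * (x - C t) + h₀ t)
    (V : ℝ → ℝ) (hV : ContDiff ℝ (⊤ : ℕ∞) V) :
    SolvesForcedOstrovsky α β h (fun x t => deriv V (x - C t) + c t) ↔
    ∃ k : ℝ, ∀ ζ : ℝ,
      α * iteratedDeriv 4 V ζ + deriv V ζ * iteratedDeriv 2 V ζ - β * V ζ = h₁ ζ + k := by
  -- basic differentiability facts
  have hWd : ∀ n : ℕ, Differentiable ℝ (iteratedDeriv n V) := by
    intro n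
    rw [iteratedDeriv_eq_iterate]
    exact (ContDiff.iterate_deriv n (hV.of_le (by simp))).differentiable (by simp)
  have hWhas : ∀ (n : ℕ) (x : ℝ),
      HasDerivAt (iteratedDeriv n V) (iteratedDeriv (n + 1) V x) x := by
    intro n x
    rw [iteratedDeriv_succ]
    exact ((hWd n) x).hasDerivAt
  have hV1has : ∀ x : ℝ, HasDerivAt (deriv V) (iteratedDeriv 2 V x) x := by
    intro x
    have := hWhas 1 x
    simpa [iteratedDeriv_one] using this
  have hVhas : ∀ x : ℝ, HasDerivAt V (deriv V x) x :=
    fun x => ((hV.differentiable (by simp)) x).hasDerivAt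
  have hh₁has : ∀ x : ℝ, HasDerivAt h₁ (deriv h₁ x) x :=
    fun x => ((hh₁.differentiable (by simp)) x).hasDerivAt
  have hchas : ∀ t : ℝ, HasDerivAt c (deriv c t) t :=
    fun t => ((hc.differentiable (by simp)) t).hasDerivAt
  -- shifted derivatives
  have hshiftW : ∀ (n : ℕ) (s x : ℝ),
      HasDerivAt (fun y => iteratedDeriv n V (y - s)) (iteratedDeriv (n + 1) V (x - s)) x := by
    intro n s x
    simpa [Function.comp_def] using (hWhas n (x - s)).comp x ((hasDerivAt_id x).sub_const s)
  have hshiftV1 : ∀ (s x : ℝ),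
      HasDerivAt (fun y => deriv V (y - s)) (iteratedDeriv 2 V (x - s)) x := by
    intro s x
    simpa [Function.comp_def] using (hV1has (x - s)).comp x ((hasDerivAt_id x).sub_const s)
  set u : ℝ → ℝ → ℝ := fun x t => deriv V (x - C t) + c t with hu
  -- spatial derivatives of u
  have hpxu : px u = fun x t => iteratedDeriv 2 V (x - C t) := by
    funext x t
    show deriv (fun y => u y t) x = _
    have : (fun y => u y t) = fun y => deriv V (y - C t) + c t := by
      funext y; simp [hu]
    rw [this]
    exact ((hshiftV1 (C t) x).add_const (c t)).deriv
  have hpx2 : px (px u) = fun x t => iteratedDeriv 3 V (x - C t) := by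
    rw [hpxu]
    funext x t
    show deriv (fun y => iteratedDeriv 2 V (y - C t)) x = _
    exact (hshiftW 2 (C t) x).deriv
  have hpx3 : px (px (px u)) = fun x t => iteratedDeriv 4 V (x - C t) := by
    rw [hpx2]
    funext x t
    show deriv (fun y => iteratedDeriv 3 V (y - C t)) x = _
    exact (hshiftW 3 (C t) x).deriv
  -- time derivative of u
  have hptu : pt u = fun x t => iteratedDeriv 2 V (x - C t) * -(c t) + deriv c t := by
    funext x t
    show deriv (fun s => u x s) t = _
    have : (fun s => u x s) = fun s => deriv V (x - C s) + c s := by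
      funext s; simp [hu]
    rw [this]
    have q1 : HasDerivAt (fun s => deriv V (x - C s))
        (iteratedDeriv 2 V (x - C t) * -(c t)) t :=
      by simpa [Function.comp_def] using (hV1has (x - C t)).comp t ((hC t).const_sub x)
    exact (q1.add (hchas t)).deriv
  -- spatial derivative of forcing h
  have hpxh : ∀ x t : ℝ, px h x t = deriv h₁ (x - C t) - β * c t := by
    intro x t
    show deriv (fun y => h y t) x = _
    have : (fun y => h y t) = fun y => h₁ (y - C t) - β * c t * (y - C t) + h₀ t := by
      funext y; exact hdef y t
    rw [this]
    have q1 : HasDerivAt (fun y => h₁ (y - C t)) (deriv h₁ (x - C t)) x := by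
      simpa [Function.comp_def] using (hh₁has (x - C t)).comp x ((hasDerivAt_id x).sub_const (C t))
    have q2 : HasDerivAt (fun y : ℝ => β * c t * (y - C t)) (β * c t) x := by
      simpa using ((hasDerivAt_id x).sub_const (C t)).const_mul (β * c t)
    exact ((q1.sub q2).add_const (h₀ t)).deriv
  -- LHS of the Ostrovsky equation in closed form
  have hLHS : ∀ x t : ℝ,
      px (fun x t => pt u x t + u x t * px u x t + α * px (px (px u)) x t) x t
        = iteratedDeriv 2 V (x - C t) * iteratedDeriv 2 V (x - C t)
          + deriv V (x - C t) * iteratedDeriv 3 V (x - C t)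
          + α * iteratedDeriv 5 V (x - C t) := by
    intro x t
    show deriv (fun y => pt u y t + u y t * px u y t + α * px (px (px u)) y t) x = _
    have hfun : (fun y => pt u y t + u y t * px u y t + α * px (px (px u)) y t)
        = fun y => deriv c t + deriv V (y - C t) * iteratedDeriv 2 V (y - C t)
            + α * iteratedDeriv 4 V (y - C t) := by
      funext y
      rw [hpx3, hptu, hpxu]
      simp only [hu]
      ring
    rw [hfun]
    have p1 := hshiftV1 (C t) x
    have p2 := hshiftW 2 (C t) x
    have p4 := hshiftW 4 (C t) x
    have := (((hasDerivAt_const x (deriv c t)).add (p1.mul p2)).add (p4.const_mul α)).deriv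
    convert this using 1
    · rfl
    · norm_num
  -- RHS of the Ostrovsky equation in closed form
  have hRHS : ∀ x t : ℝ,
      β * u x t + px h x t = β * deriv V (x - C t) + deriv h₁ (x - C t) := by
    intro x t
    rw [hpxh x t]
    simp only [hu]
    ring
  -- the profile function F and its derivative
  set F : ℝ → ℝ := fun ζ =>
    α * iteratedDeriv 4 V ζ + deriv V ζ * iteratedDeriv 2 V ζ - β * V ζ - h₁ ζ with hF
  have hFhas : ∀ ζ : ℝ, HasDerivAt F
      (α * iteratedDeriv 5 V ζ
        + (iteratedDeriv 2 V ζ * iteratedDeriv 2 V ζ + deriv V ζ * iteratedDeriv 3 V ζ)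
        - β * deriv V ζ - deriv h₁ ζ) ζ := by
    intro ζ
    exact ((((hWhas 4 ζ).const_mul α).add ((hV1has ζ).mul (hWhas 2 ζ))).sub
      ((hVhas ζ).const_mul β)).sub (hh₁has ζ)
  constructor
  · intro hsol
    have hE : ∀ ζ : ℝ,
        iteratedDeriv 2 V ζ * iteratedDeriv 2 V ζ + deriv V ζ * iteratedDeriv 3 V ζ
          + α * iteratedDeriv 5 V ζ = β * deriv V ζ + deriv h₁ ζ := by
      intro ζ
      have := hsol (ζ + C 0) 0
      rw [hLHS (ζ + C 0) 0, hRHS (ζ + C 0) 0] at this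
      simpa [add_sub_cancel_right] using this
    have hderiv0 : ∀ ζ : ℝ, deriv F ζ = 0 := by
      intro ζ
      rw [(hFhas ζ).deriv]
      have := hE ζ
      linarith
    refine ⟨F 0, fun ζ => ?_⟩
    have hconst := is_const_of_deriv_eq_zero
      (fun ζ => (hFhas ζ).differentiableAt) hderiv0 ζ 0
    have : F ζ = F 0 := hconst
    simp only [hF] at this ⊢
    linarith
  · rintro ⟨k, hk⟩
    have hFk : F = fun _ => k := by
      funext ζ
      simp only [hF]
      linarith [hk ζ]
    have hE : ∀ ζ : ℝ,
        iteratedDeriv 2 V ζ * iteratedDeriv 2 V ζ + deriv V ζ * iteratedDeriv 3 V ζ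
          + α * iteratedDeriv 5 V ζ = β * deriv V ζ + deriv h₁ ζ := by
      intro ζ
      have hd := (hFhas ζ).deriv
      rw [hFk] at hd
      simp only [deriv_const'] at hd
      linarith
    intro x t
    rw [hLHS x t, hRHS x t]
    have := hE (x - C t)
    linarith
end

section
/- Let α be a real constant, β a nonzero real constant, and let h₂, h₁, h₀ : ℝ → ℝ be smooth. Then the function u(x,t) = −(2/β) h₂(t) x − ( (1/β) h₁(t) + (2/β²) h₂'(t) − (4/β³) h₂(t)² ), which is linear in x with time-dependent coefficients, is an exact solution of the forced Ostrovsky equation ∂x(u_t + u u_x + α u_xxx) = β u + ∂x h with quadratic forcing h(x,t) = h₂(t) x² + h₁(t) x + h₀(t). -/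
/-- The function `u = −(2/β) h₂(t) x − ((1/β) h₁(t) + (2/β²) h₂'(t) − (4/β³) h₂(t)²)`,
linear in `x` with time-dependent coefficients, is an exact solution of the forced
Ostrovsky equation with quadratic forcing `h = h₂(t)x² + h₁(t)x + h₀(t)`. -/
theorem linear_in_x_exact_solution
    (α β : ℝ) (hβ : β ≠ 0)
    (h₂ h₁ h₀ : ℝ → ℝ)
    (hh₂ : ContDiff ℝ (⊤ : ℕ∞) h₂) (hh₁ : ContDiff ℝ (⊤ : ℕ∞) h₁) (hh₀ : ContDiff ℝ (⊤ : ℕ∞) h₀)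
    (h : ℝ → ℝ → ℝ)
    (hdef : ∀ x t : ℝ, h x t = h₂ t * x ^ 2 + h₁ t * x + h₀ t) :
    SolvesForcedOstrovsky α β h
      (fun x t => -(2 / β) * h₂ t * x
        - ((1 / β) * h₁ t + (2 / β ^ 2) * deriv h₂ t - (4 / β ^ 3) * (h₂ t) ^ 2)) := by
  set A : ℝ → ℝ := fun t => -(2 / β) * h₂ t with hAdef
  set B : ℝ → ℝ := fun t =>
    (1 / β) * h₁ t + (2 / β ^ 2) * deriv h₂ t - (4 / β ^ 3) * (h₂ t) ^ 2 with hBdef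
  set u : ℝ → ℝ → ℝ := fun x t => A t * x - B t with hudef
  have hh₂' : ContDiff ℝ ((⊤ : ℕ∞) : WithTop ℕ∞) (deriv h₂) :=
    (contDiff_infty_iff_deriv.mp (hh₂.of_le (by simp))).2
  -- space derivatives of u
  have hpx : ∀ x t : ℝ, px u x t = A t := by
    intro x t
    have : HasDerivAt (fun y => u y t) (A t) x := by
      simpa [hudef] using ((hasDerivAt_id x).const_mul (A t)).sub_const (B t)
    simpa [px] using this.deriv
  have hpxx : ∀ x t : ℝ, px (px u) x t = 0 := by
    intro x t
    have h' : (fun y => px u y t) = fun _ => A t := funext fun y => hpx y t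
    show deriv (fun y => px u y t) x = 0
    rw [h']; exact deriv_const x _
  have hpxxx : ∀ x t : ℝ, px (px (px u)) x t = 0 := by
    intro x t
    have h' : (fun y => px (px u) y t) = fun _ => (0 : ℝ) := funext fun y => hpxx y t
    show deriv (fun y => px (px u) y t) x = 0
    rw [h']; exact deriv_const x _
  -- time derivative of u
  set A' : ℝ → ℝ := fun t => -(2 / β) * deriv h₂ t with hA'def
  set B' : ℝ → ℝ := fun t => (1 / β) * deriv h₁ t + (2 / β ^ 2) * deriv (deriv h₂) t
    - (4 / β ^ 3) * (2 * h₂ t * deriv h₂ t) with hB'def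
  have hpt : ∀ x t : ℝ, pt u x t = A' t * x - B' t := by
    intro x t
    have d2 : HasDerivAt h₂ (deriv h₂ t) t := (hh₂.differentiable (by simp) t).hasDerivAt
    have d1 : HasDerivAt h₁ (deriv h₁ t) t := (hh₁.differentiable (by simp) t).hasDerivAt
    have d2' : HasDerivAt (deriv h₂) (deriv (deriv h₂) t) t :=
      (hh₂'.differentiable (by norm_num) t).hasDerivAt
    have dA : HasDerivAt A (A' t) t := d2.const_mul _
    have dsq : HasDerivAt (fun s => (h₂ s) ^ 2) (2 * h₂ t * deriv h₂ t) t := by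
      simpa [mul_comm, mul_assoc, mul_left_comm] using d2.fun_pow 2
    have dB : HasDerivAt B (B' t) t :=
      ((d1.const_mul _).add (d2'.const_mul _)).sub (dsq.const_mul _)
    have : HasDerivAt (fun s => u x s) (A' t * x - B' t) t := (dA.mul_const x).sub dB
    simpa [pt] using this.deriv
  intro x t
  -- rewrite the inner function as linear in y
  have hinner : (fun y => pt u y t + u y t * px u y t + α * px (px (px u)) y t)
      = fun y => (A' t + A t * A t) * y - (B' t + A t * B t) := by
    funext y
    rw [hpt y t, hpx y t, hpxxx y t]
    show A' t * y - B' t + (A t * y - B t) * A t + α * 0 = _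
    ring
  have hLHS : px (fun x t => pt u x t + u x t * px u x t + α * px (px (px u)) x t) x t
      = A' t + A t * A t := by
    have : HasDerivAt (fun y => (A' t + A t * A t) * y - (B' t + A t * B t))
        (A' t + A t * A t) x := by
      simpa using ((hasDerivAt_id x).const_mul (A' t + A t * A t)).sub_const (B' t + A t * B t)
    show deriv (fun y => pt u y t + u y t * px u y t + α * px (px (px u)) y t) x = _
    rw [hinner]; exact this.deriv
  have hRHS : px h x t = 2 * h₂ t * x + h₁ t := by
    have hfun : (fun y => h y t) = fun y => h₂ t * y ^ 2 + h₁ t * y + h₀ t :=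
      funext fun y => hdef y t
    have : HasDerivAt (fun y => h₂ t * y ^ 2 + h₁ t * y + h₀ t) (2 * h₂ t * x + h₁ t) x := by
      have := ((((hasDerivAt_id x).pow 2).const_mul (h₂ t)).add
        ((hasDerivAt_id x).const_mul (h₁ t))).add_const (h₀ t)
      simpa [mul_comm, mul_assoc, mul_left_comm] using this
    show deriv (fun y => h y t) x = _
    rw [hfun]; exact this.deriv
  rw [hLHS, hRHS]
  show A' t + A t * A t = β * (A t * x - B t) + (2 * h₂ t * x + h₁ t)
  simp only [hAdef, hBdef, hA'def]
  field_simp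
  ring
end

section
/- Let α be a real constant, β a nonzero real constant, μ ∈ ℝ, and let h̃₁, h̃₀ : ℝ → ℝ be smooth. Define the speed c̃(t) = μ − h̃₁(t)/β and let C̃ be an antiderivative of c̃. Let V : ℝ → ℝ be smooth and define u(x,t) = V'(x − C̃(t)) + c̃(t) − μ. Then u solves the forced Ostrovsky equation ∂x(u_t + u u_x + α u_xxx) = β u + ∂x h with linear forcing h(x,t) = h̃₁(t) x + h̃₀(t) if and only if there is a constant k ∈ ℝ such that α V''''(ζ) + (V'(ζ) − μ) V''(ζ) − β V(ζ) = k for all ζ ∈ ℝ. In particular, any solution V of the travelling-wave ODE α V'''' + (V' − μ) V'' − β V = 0 gives a generalized travelling wave solution of the forced equation. -/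
open scoped ContDiff


/-- Travelling wave reduction (case `h̃₂ = 0`): with speed `c̃(t) = μ − h̃₁(t)/β` and
`C̃' = c̃`, the function `u = V'(x − C̃(t)) + c̃(t) − μ` solves the forced Ostrovsky
equation with linear forcing `h = h̃₁(t)x + h̃₀(t)` iff `V` satisfies
`α V'''' + (V' − μ)V'' − β V = k` for some constant `k`. -/
theorem travelling_wave_reduction_iff
    (α β μ : ℝ) (hα : α ≠ 0) (hβ : β ≠ 0)
    (h₁ h₀ : ℝ → ℝ) (hh₁ : ContDiff ℝ (⊤ : ℕ∞) h₁) (hh₀ : ContDiff ℝ (⊤ : ℕ∞) h₀)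
    (c C : ℝ → ℝ)
    (hc : ∀ t : ℝ, c t = μ - h₁ t / β)
    (hC : ∀ t : ℝ, HasDerivAt C (c t) t)
    (h : ℝ → ℝ → ℝ)
    (hdef : ∀ x t : ℝ, h x t = h₁ t * x + h₀ t)
    (V : ℝ → ℝ) (hV : ContDiff ℝ (⊤ : ℕ∞) V) :
    SolvesForcedOstrovsky α β h (fun x t => deriv V (x - C t) + c t - μ) ↔
    ∃ k : ℝ, ∀ ζ : ℝ,
      α * iteratedDeriv 4 V ζ + (deriv V ζ - μ) * iteratedDeriv 2 V ζ - β * V ζ = k := by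
  have hVi : ContDiff ℝ ∞ V := hV.of_le (by simp)
  have hh₁i : ContDiff ℝ ∞ h₁ := hh₁.of_le (by simp)
  set u : ℝ → ℝ → ℝ := fun x t => deriv V (x - C t) + c t - μ with hu
  have hIter : ∀ (n : ℕ) (z : ℝ),
      HasDerivAt (iteratedDeriv n V) (iteratedDeriv (n+1) V z) z := by
    intro n z
    have h1 : ContDiff ℝ ∞ (iteratedDeriv n V) := by
      rw [iteratedDeriv_eq_iterate]; exact hVi.iterate_deriv n
    have h2 := (h1.differentiable (by simp) z).hasDerivAt
    rwa [iteratedDeriv_succ]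
  have hIter1 : ∀ z : ℝ, HasDerivAt (deriv V) (iteratedDeriv 2 V z) z := by
    intro z; simpa [iteratedDeriv_one] using hIter 1 z
  have hShift : ∀ (n : ℕ) (a x : ℝ),
      HasDerivAt (fun y => iteratedDeriv n V (y - a)) (iteratedDeriv (n+1) V (x - a)) x := by
    intro n a x
    simpa [Function.comp_def] using (hIter n (x - a)).comp x ((hasDerivAt_id x).sub_const a)
  have hShift1 : ∀ (a x : ℝ),
      HasDerivAt (fun y => deriv V (y - a)) (iteratedDeriv 2 V (x - a)) x := by
    intro a x
    simpa [Function.comp_def] using (hIter1 (x - a)).comp x ((hasDerivAt_id x).sub_const a)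
  -- spatial derivatives of u
  have hpx : ∀ x t : ℝ, px u x t = iteratedDeriv 2 V (x - C t) := by
    intro x t
    exact (((hShift1 (C t) x).add_const (c t)).sub_const μ).deriv
  have hpx2 : ∀ x t : ℝ, px (px u) x t = iteratedDeriv 3 V (x - C t) := by
    intro x t
    have : (fun y => px u y t) = fun y => iteratedDeriv 2 V (y - C t) :=
      funext fun y => hpx y t
    show deriv (fun y => px u y t) x = _
    rw [this]; exact (hShift 2 (C t) x).deriv
  have hpx3 : ∀ x t : ℝ, px (px (px u)) x t = iteratedDeriv 4 V (x - C t) := by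
    intro x t
    have : (fun y => px (px u) y t) = fun y => iteratedDeriv 3 V (y - C t) :=
      funext fun y => hpx2 y t
    show deriv (fun y => px (px u) y t) x = _
    rw [this]; exact (hShift 3 (C t) x).deriv
  -- derivative of c
  have hcD : ∀ t : ℝ, HasDerivAt c (-(deriv h₁ t / β)) t := by
    intro t
    have hc' : c = fun t => μ - h₁ t / β := funext hc
    rw [hc']
    exact ((hasDerivAt_const t μ).sub
      (((hh₁i.differentiable (by simp) t).hasDerivAt).div_const β)).congr_deriv (zero_sub _)
  -- time derivative of u
  have hpt : ∀ x t : ℝ,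
      pt u x t = iteratedDeriv 2 V (x - C t) * (-(c t)) + -(deriv h₁ t / β) := by
    intro x t
    have hin : HasDerivAt (fun s => x - C s) (-(c t)) t := by
      exact ((hasDerivAt_const t x).sub (hC t)).congr_deriv (zero_sub _)
    have h1 : HasDerivAt (fun s => deriv V (x - C s))
        (iteratedDeriv 2 V (x - C t) * (-(c t))) t :=
      by simpa [Function.comp_def] using (hIter1 (x - C t)).comp t hin
    have h2 := ((h1.add (hcD t)).sub_const μ).deriv
    exact h2
  -- the inner function and its spatial derivative
  have hLHS : ∀ x t : ℝ,
      px (fun x t => pt u x t + u x t * px u x t + α * px (px (px u)) x t) x t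
      = iteratedDeriv 3 V (x - C t) * (-(c t))
        + (iteratedDeriv 2 V (x - C t) * iteratedDeriv 2 V (x - C t)
           + (deriv V (x - C t) + c t - μ) * iteratedDeriv 3 V (x - C t))
        + α * iteratedDeriv 5 V (x - C t) := by
    intro x t
    have hfun : (fun y => pt u y t + u y t * px u y t + α * px (px (px u)) y t)
        = fun y => (iteratedDeriv 2 V (y - C t) * (-(c t)) + -(deriv h₁ t / β))
          + (deriv V (y - C t) + c t - μ) * iteratedDeriv 2 V (y - C t)
          + α * iteratedDeriv 4 V (y - C t) := by
      funext y
      rw [hpt y t, hpx y t, hpx3 y t]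
    show deriv (fun y => pt u y t + u y t * px u y t + α * px (px (px u)) y t) x = _
    rw [hfun]
    have t1 : HasDerivAt (fun y => iteratedDeriv 2 V (y - C t) * (-(c t)) + -(deriv h₁ t / β))
        (iteratedDeriv 3 V (x - C t) * (-(c t))) x :=
      ((hShift 2 (C t) x).mul_const (-(c t))).add_const _
    have t2 : HasDerivAt (fun y => (deriv V (y - C t) + c t - μ) * iteratedDeriv 2 V (y - C t))
        (iteratedDeriv 2 V (x - C t) * iteratedDeriv 2 V (x - C t)
          + (deriv V (x - C t) + c t - μ) * iteratedDeriv 3 V (x - C t)) x :=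
      (((hShift1 (C t) x).add_const (c t)).sub_const μ).mul (hShift 2 (C t) x)
    have t3 : HasDerivAt (fun y => α * iteratedDeriv 4 V (y - C t))
        (α * iteratedDeriv 5 V (x - C t)) x :=
      (hShift 4 (C t) x).const_mul α
    exact ((t1.add t2).add t3).deriv
  -- RHS
  have hpxh : ∀ x t : ℝ, px h x t = h₁ t := by
    intro x t
    have hfun : (fun y => h y t) = fun y => h₁ t * y + h₀ t := funext fun y => hdef y t
    show deriv (fun y => h y t) x = _
    rw [hfun]
    simpa using (((hasDerivAt_id x).const_mul (h₁ t)).add_const (h₀ t)).deriv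
  -- the conserved quantity and its derivative
  set E : ℝ → ℝ := fun z =>
    α * iteratedDeriv 4 V z + (deriv V z - μ) * iteratedDeriv 2 V z - β * V z with hE
  set D : ℝ → ℝ := fun z =>
    α * iteratedDeriv 5 V z
      + (iteratedDeriv 2 V z * iteratedDeriv 2 V z + (deriv V z - μ) * iteratedDeriv 3 V z)
      - β * deriv V z with hD
  have hED : ∀ z : ℝ, HasDerivAt E (D z) z := by
    intro z
    exact (((hIter 4 z).const_mul α).add
      (((hIter1 z).sub_const μ).mul (hIter 2 z))).sub
      (((hVi.differentiable (by simp) z).hasDerivAt).const_mul β)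
  -- pointwise equivalence of the PDE and D = 0
  have hpoint : ∀ x t : ℝ,
      (px (fun x t => pt u x t + u x t * px u x t + α * px (px (px u)) x t) x t
        = β * u x t + px h x t) ↔ D (x - C t) = 0 := by
    intro x t
    rw [hLHS x t, hpxh x t]
    have hu' : u x t = deriv V (x - C t) + c t - μ := rfl
    have hcan : β * (c t - μ) = -h₁ t := by rw [hc t]; field_simp; ring
    have key : iteratedDeriv 3 V (x - C t) * (-(c t))
        + (iteratedDeriv 2 V (x - C t) * iteratedDeriv 2 V (x - C t)
           + (deriv V (x - C t) + c t - μ) * iteratedDeriv 3 V (x - C t))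
        + α * iteratedDeriv 5 V (x - C t)
        - (β * (deriv V (x - C t) + c t - μ) + h₁ t) = D (x - C t) := by
      rw [hD]
      linear_combination -hcan
    rw [hu']
    constructor <;> intro hh <;> linarith [key]
  constructor
  · intro hsol
    have hD0 : ∀ z : ℝ, D z = 0 := by
      intro z
      have := (hpoint (z + C 0) 0).mp (hsol (z + C 0) 0)
      simpa using this
    refine ⟨E 0, fun ζ => ?_⟩
    have hdiff : Differentiable ℝ E := fun z => (hED z).differentiableAt
    have hconst := is_const_of_deriv_eq_zero hdiff (fun z => by rw [(hED z).deriv, hD0 z]) ζ 0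
    simpa [hE] using hconst
  · intro ⟨k, hk⟩ x t
    rw [hpoint x t]
    have hEk : E = fun _ => k := funext fun z => hk z
    have := (hED (x - C t)).deriv
    rw [hEk] at this
    simp at this
    exact this.symm
end

section
/- Let α, β, a₃, a₂, a₁, a₀ be real numbers with β ≠ 0 and 72a₃ + β² ≥ 0, and let c₃ = (β + σ√(72a₃ + β²))/36 for a fixed sign σ ∈ {+1, −1}. Assume 18c₃ ≠ β and 6c₃ ≠ β. Then there exist unique real numbers c₂, c₁, c₀, namely c₂ = a₂/(18c₃ − β), c₁ = (a₁ − 4c₂²)/(6c₃ − β), c₀ = (2c₁c₂ − a₀)/β, such that V(ζ) = c₃ζ³ + c₂ζ² + c₁ζ + c₀ satisfies α V'''' + V' V'' − β V = a₃ζ³ + a₂ζ² + a₁ζ + a₀ for all ζ ∈ ℝ. -/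
/-- The cubic `c₃ζ³ + c₂ζ² + c₁ζ + c₀` (with given `c₃`) solves the reduced
travelling-wave ODE with cubic forcing `a₃ζ³ + a₂ζ² + a₁ζ + a₀`. -/
def CubicSolvesODE (α β a₃ a₂ a₁ a₀ c₃ : ℝ) (p : ℝ × ℝ × ℝ) : Prop :=
  ∀ ζ : ℝ,
    α * iteratedDeriv 4 (fun z => c₃ * z ^ 3 + p.1 * z ^ 2 + p.2.1 * z + p.2.2) ζ
      + deriv (fun z => c₃ * z ^ 3 + p.1 * z ^ 2 + p.2.1 * z + p.2.2) ζ
        * iteratedDeriv 2 (fun z => c₃ * z ^ 3 + p.1 * z ^ 2 + p.2.1 * z + p.2.2) ζ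
      - β * (c₃ * ζ ^ 3 + p.1 * ζ ^ 2 + p.2.1 * ζ + p.2.2)
    = a₃ * ζ ^ 3 + a₂ * ζ ^ 2 + a₁ * ζ + a₀

lemma deriv_cubic (a b c d : ℝ) :
    deriv (fun z : ℝ => a * z ^ 3 + b * z ^ 2 + c * z + d)
      = fun z => 3 * a * z ^ 2 + 2 * b * z + c := by
  funext ζ
  have h : HasDerivAt (fun z : ℝ => a * z ^ 3 + b * z ^ 2 + c * z + d)
      (3 * a * ζ ^ 2 + 2 * b * ζ + c) ζ := by
    have := (((hasDerivAt_pow 3 ζ).const_mul a).add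
      ((hasDerivAt_pow 2 ζ).const_mul b)).add
      (((hasDerivAt_id ζ).const_mul c).add (hasDerivAt_const ζ d))
    have hf : (fun z : ℝ => a * z ^ 3 + b * z ^ 2 + c * z + d) =
        ((fun y => a * y ^ 3) + fun y => b * y ^ 2) + ((fun y => c * id y) + fun x => d) := by
      funext z; simp only [id_eq, Pi.add_apply]; ring
    rw [hf]
    exact this.congr_deriv (by simp; ring)
  exact h.deriv

lemma deriv_quad (a b c : ℝ) :
    deriv (fun z : ℝ => 3 * a * z ^ 2 + 2 * b * z + c)
      = fun z => 6 * a * z + 2 * b := by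
  funext ζ
  have h : HasDerivAt (fun z : ℝ => 3 * a * z ^ 2 + 2 * b * z + c)
      (6 * a * ζ + 2 * b) ζ := by
    have := ((hasDerivAt_pow 2 ζ).const_mul (3*a)).add
      (((hasDerivAt_id ζ).const_mul (2*b)).add (hasDerivAt_const ζ c))
    have hf : (fun z : ℝ => 3 * a * z ^ 2 + 2 * b * z + c) =
        (fun y => 3 * a * y ^ 2) + ((fun y => 2 * b * id y) + fun x => c) := by
      funext z; simp only [id_eq, Pi.add_apply]; ring
    rw [hf]
    exact this.congr_deriv (by simp; ring)
  exact h.deriv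

lemma deriv_lin (a b : ℝ) :
    deriv (fun z : ℝ => 6 * a * z + 2 * b) = fun _ => 6 * a := by
  funext ζ
  have h : HasDerivAt (fun z : ℝ => 6 * a * z + 2 * b) (6 * a) ζ := by
    simpa using (hasDerivAt_id ζ).const_mul (6*a)
  exact h.deriv

lemma ode_eval (α β a₃ a₂ a₁ a₀ c₃ d₂ d₁ d₀ : ℝ) :
    CubicSolvesODE α β a₃ a₂ a₁ a₀ c₃ (d₂, d₁, d₀) ↔
    ∀ ζ : ℝ, (18 * c₃ ^ 2 - β * c₃) * ζ ^ 3 + (18 * c₃ * d₂ - β * d₂) * ζ ^ 2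
      + (4 * d₂ ^ 2 + 6 * c₃ * d₁ - β * d₁) * ζ + (2 * d₁ * d₂ - β * d₀)
      = a₃ * ζ ^ 3 + a₂ * ζ ^ 2 + a₁ * ζ + a₀ := by
  have key : ∀ ζ : ℝ,
      α * iteratedDeriv 4 (fun z : ℝ => c₃ * z ^ 3 + d₂ * z ^ 2 + d₁ * z + d₀) ζ
      + deriv (fun z : ℝ => c₃ * z ^ 3 + d₂ * z ^ 2 + d₁ * z + d₀) ζ
        * iteratedDeriv 2 (fun z : ℝ => c₃ * z ^ 3 + d₂ * z ^ 2 + d₁ * z + d₀) ζ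
      - β * (c₃ * ζ ^ 3 + d₂ * ζ ^ 2 + d₁ * ζ + d₀)
      = (18 * c₃ ^ 2 - β * c₃) * ζ ^ 3 + (18 * c₃ * d₂ - β * d₂) * ζ ^ 2
      + (4 * d₂ ^ 2 + 6 * c₃ * d₁ - β * d₁) * ζ + (2 * d₁ * d₂ - β * d₀) := by
    intro ζ
    simp only [iteratedDeriv_succ, iteratedDeriv_zero, deriv_cubic, deriv_quad, deriv_lin,
      deriv_const']
    ring
  unfold CubicSolvesODE
  exact forall_congr' fun ζ => by rw [key ζ]

/-- Given `c₃ = (β ± √(72a₃ + β²))/36` with `18c₃ ≠ β` and `6c₃ ≠ β`, there exist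
unique real numbers `c₂, c₁, c₀`, namely `c₂ = a₂/(18c₃ − β)`,
`c₁ = (a₁ − 4c₂²)/(6c₃ − β)`, `c₀ = (2c₁c₂ − a₀)/β`, such that
`V(ζ) = c₃ζ³ + c₂ζ² + c₁ζ + c₀` satisfies
`α V'''' + V' V'' − β V = a₃ζ³ + a₂ζ² + a₁ζ + a₀` for all `ζ`. -/
theorem cubic_solution_exists_unique
    (α β a₃ a₂ a₁ a₀ σ c₃ c₂ c₁ c₀ : ℝ)
    (hβ : β ≠ 0) (hdisc : 72 * a₃ + β ^ 2 ≥ 0)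
    (hσ : σ = 1 ∨ σ = -1)
    (hc₃ : c₃ = (β + σ * Real.sqrt (72 * a₃ + β ^ 2)) / 36)
    (h18 : 18 * c₃ ≠ β) (h6 : 6 * c₃ ≠ β)
    (hc₂ : c₂ = a₂ / (18 * c₃ - β))
    (hc₁ : c₁ = (a₁ - 4 * c₂ ^ 2) / (6 * c₃ - β))
    (hc₀ : c₀ = (2 * c₁ * c₂ - a₀) / β) :
    CubicSolvesODE α β a₃ a₂ a₁ a₀ c₃ (c₂, c₁, c₀) ∧
    ∀ p : ℝ × ℝ × ℝ, CubicSolvesODE α β a₃ a₂ a₁ a₀ c₃ p → p = (c₂, c₁, c₀) := by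
  have hne18 : 18 * c₃ - β ≠ 0 := sub_ne_zero.mpr h18
  have hne6 : 6 * c₃ - β ≠ 0 := sub_ne_zero.mpr h6
  have hs : Real.sqrt (72 * a₃ + β ^ 2) ^ 2 = 72 * a₃ + β ^ 2 := Real.sq_sqrt hdisc
  have h36 : 36 * c₃ - β = σ * Real.sqrt (72 * a₃ + β ^ 2) := by rw [hc₃]; ring
  have hσ2 : σ ^ 2 = 1 := by rcases hσ with h | h <;> rw [h] <;> norm_num
  have hsq : (36 * c₃ - β) ^ 2 = 72 * a₃ + β ^ 2 := by
    rw [h36, mul_pow, hσ2, hs, one_mul]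
  have ha₃ : 18 * c₃ ^ 2 - β * c₃ = a₃ := by nlinarith [hsq]
  have e₂ : 18 * c₃ * c₂ - β * c₂ = a₂ := by
    rw [hc₂]; field_simp
  have e₁ : 4 * c₂ ^ 2 + 6 * c₃ * c₁ - β * c₁ = a₁ := by
    rw [hc₁]; field_simp; ring
  have e₀ : 2 * c₁ * c₂ - β * c₀ = a₀ := by
    rw [hc₀]; field_simp; ring
  constructor
  · rw [ode_eval]
    intro ζ
    linear_combination ζ ^ 3 * ha₃ + ζ ^ 2 * e₂ + ζ * e₁ + e₀
  · rintro ⟨d₂, d₁, d₀⟩ h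
    rw [ode_eval] at h
    have h0 := h 0
    have h1 := h 1
    have hm := h (-1)
    norm_num at h0 h1 hm
    have E2 : 18 * c₃ * d₂ - β * d₂ = a₂ := by linarith
    have E1 : 4 * d₂ ^ 2 + 6 * c₃ * d₁ - β * d₁ = a₁ := by linarith
    have E0 : 2 * d₁ * d₀ = 2 * d₁ * d₀ := rfl
    have hd2 : d₂ = c₂ := by
      have : (18 * c₃ - β) * d₂ = (18 * c₃ - β) * c₂ := by linarith [e₂, E2]
      exact mul_left_cancel₀ hne18 this
    have hd1 : d₁ = c₁ := by
      have : (6 * c₃ - β) * d₁ = (6 * c₃ - β) * c₁ := by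
        rw [hd2] at E1; linarith [e₁, E1]
      exact mul_left_cancel₀ hne6 this
    have hd0 : d₀ = c₀ := by
      have : β * d₀ = β * c₀ := by
        rw [hd2, hd1] at h0; linarith [e₀, h0]
      exact mul_left_cancel₀ hβ this
    rw [hd2, hd1, hd0]
end

section
/- Let α, β be real constants and c₀ > 0 a real constant. Then the rational function V(ζ) = 24αζ/(c₀ + ζ²) satisfies α V''''(ζ) + V'(ζ) V''(ζ) − β V(ζ) = −24αβ ζ/(c₀ + ζ²) − 576α² ζ/(c₀ + ζ²)³ for all ζ ∈ ℝ. Consequently V solves the reduced travelling-wave ODE α V'''' + V' V'' − β V = h₁ with the rational forcing h₁(ζ) = a₁ ζ/(c₀ + ζ²) + a₃ ζ/(c₀ + ζ²)³ where a₁ = −24αβ and a₃ = −(a₁/β)² = −576α²; the corresponding wave profile u = V' is a nonsingular single-hump heavy-tail wave. -/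
section aux

variable {α c₀ : ℝ}

lemma hd0 (hc₀ : c₀ > 0) (z : ℝ) :
    HasDerivAt (fun z : ℝ => 24 * α * z / (c₀ + z ^ 2))
      (24 * α * (c₀ - z ^ 2) / (c₀ + z ^ 2) ^ 2) z := by
  have hs : c₀ + z ^ 2 ≠ 0 := by positivity
  have h := (((hasDerivAt_id z).const_mul (24 * α)).div
    (((hasDerivAt_id z).pow 2).const_add c₀) hs)
  refine h.congr_deriv ?_
  simp only [id_eq, Pi.pow_apply]
  field_simp
  ring

lemma hd1 (hc₀ : c₀ > 0) (z : ℝ) :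
    HasDerivAt (fun z : ℝ => 24 * α * (c₀ - z ^ 2) / (c₀ + z ^ 2) ^ 2)
      (48 * α * (z ^ 3 - 3 * c₀ * z) / (c₀ + z ^ 2) ^ 3) z := by
  have hs : (c₀ + z ^ 2) ^ 2 ≠ 0 := by positivity
  have hn : HasDerivAt (fun z : ℝ => 24 * α * (c₀ - z ^ 2)) (24 * α * (-(2 * z))) z := by
    have := (((hasDerivAt_id z).pow 2).const_sub c₀).const_mul (24 * α)
    refine this.congr_deriv ?_
    simp only [id_eq]
    push_cast
    ring
  have hd : HasDerivAt (fun z : ℝ => (c₀ + z ^ 2) ^ 2)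
      (2 * (c₀ + z ^ 2) ^ 1 * (2 * z)) z := by
    have := (((hasDerivAt_id z).pow 2).const_add c₀).pow 2
    refine this.congr_deriv ?_
    simp only [id_eq, Pi.pow_apply]
    push_cast
    ring
  have h := hn.div hd hs
  refine h.congr_deriv ?_
  have hs0 : c₀ + z ^ 2 ≠ 0 := by positivity
  field_simp
  ring

lemma hd2 (hc₀ : c₀ > 0) (z : ℝ) :
    HasDerivAt (fun z : ℝ => 48 * α * (z ^ 3 - 3 * c₀ * z) / (c₀ + z ^ 2) ^ 3)
      (144 * α * (-z ^ 4 + 6 * c₀ * z ^ 2 - c₀ ^ 2) / (c₀ + z ^ 2) ^ 4) z := by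
  have hs : (c₀ + z ^ 2) ^ 3 ≠ 0 := by positivity
  have hn : HasDerivAt (fun z : ℝ => 48 * α * (z ^ 3 - 3 * c₀ * z))
      (48 * α * (3 * z ^ 2 - 3 * c₀)) z := by
    have := (((hasDerivAt_id z).pow 3).sub ((hasDerivAt_id z).const_mul (3 * c₀))).const_mul
      (48 * α)
    refine this.congr_deriv ?_
    simp only [id_eq]
    push_cast
    ring
  have hd : HasDerivAt (fun z : ℝ => (c₀ + z ^ 2) ^ 3)
      (3 * (c₀ + z ^ 2) ^ 2 * (2 * z)) z := by
    have := (((hasDerivAt_id z).pow 2).const_add c₀).pow 3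
    refine this.congr_deriv ?_
    simp only [id_eq, Pi.pow_apply]
    push_cast
    ring
  have h := hn.div hd hs
  refine h.congr_deriv ?_
  have hs0 : c₀ + z ^ 2 ≠ 0 := by positivity
  field_simp
  ring

lemma hd3 (hc₀ : c₀ > 0) (z : ℝ) :
    HasDerivAt (fun z : ℝ => 144 * α * (-z ^ 4 + 6 * c₀ * z ^ 2 - c₀ ^ 2) / (c₀ + z ^ 2) ^ 4)
      (576 * α * (z ^ 5 - 10 * c₀ * z ^ 3 + 5 * c₀ ^ 2 * z) / (c₀ + z ^ 2) ^ 5) z := by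
  have hs : (c₀ + z ^ 2) ^ 4 ≠ 0 := by positivity
  have hn : HasDerivAt (fun z : ℝ => 144 * α * (-z ^ 4 + 6 * c₀ * z ^ 2 - c₀ ^ 2))
      (144 * α * (-(4 * z ^ 3) + 6 * c₀ * (2 * z))) z := by
    have h1 : HasDerivAt (fun x : ℝ => -x ^ 4 + 6 * c₀ * x ^ 2 - c₀ ^ 2)
        (-(4 * z ^ 3) + 6 * c₀ * (2 * z)) z := by
      have := (((hasDerivAt_id z).pow 4).neg.add
        (((hasDerivAt_id z).pow 2).const_mul (6 * c₀))).sub_const (c₀ ^ 2)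
      refine this.congr_deriv ?_
      simp only [id_eq]
      push_cast
      ring
    exact h1.const_mul (144 * α)
  have hd : HasDerivAt (fun z : ℝ => (c₀ + z ^ 2) ^ 4)
      (4 * (c₀ + z ^ 2) ^ 3 * (2 * z)) z := by
    have := (((hasDerivAt_id z).pow 2).const_add c₀).pow 4
    refine this.congr_deriv ?_
    simp only [id_eq, Pi.pow_apply]
    push_cast
    ring
  have h := hn.div hd hs
  refine h.congr_deriv ?_
  have hs0 : c₀ + z ^ 2 ≠ 0 := by positivity
  field_simp
  ring

end aux

/-- The rational function `V(ζ) = 24αζ/(c₀ + ζ²)` (with `c₀ > 0`) satisfies the reduced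
travelling-wave ODE `α V'''' + V' V'' − β V = h₁` with the rational forcing
`h₁(ζ) = −24αβ ζ/(c₀ + ζ²) − 576α² ζ/(c₀ + ζ²)³`. -/
theorem rational_heavy_tail_solution
    (α β c₀ : ℝ) (hc₀ : c₀ > 0) :
    ∀ ζ : ℝ,
      α * iteratedDeriv 4 (fun z => 24 * α * z / (c₀ + z ^ 2)) ζ
        + deriv (fun z => 24 * α * z / (c₀ + z ^ 2)) ζ
          * iteratedDeriv 2 (fun z => 24 * α * z / (c₀ + z ^ 2)) ζ
        - β * (24 * α * ζ / (c₀ + ζ ^ 2))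
      = -24 * α * β * ζ / (c₀ + ζ ^ 2) - 576 * α ^ 2 * ζ / (c₀ + ζ ^ 2) ^ 3 := by
  intro ζ
  have e0 : deriv (fun z : ℝ => 24 * α * z / (c₀ + z ^ 2))
      = fun z => 24 * α * (c₀ - z ^ 2) / (c₀ + z ^ 2) ^ 2 :=
    funext fun z => (hd0 hc₀ z).deriv
  have e1 : deriv (fun z : ℝ => 24 * α * (c₀ - z ^ 2) / (c₀ + z ^ 2) ^ 2)
      = fun z => 48 * α * (z ^ 3 - 3 * c₀ * z) / (c₀ + z ^ 2) ^ 3 :=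
    funext fun z => (hd1 hc₀ z).deriv
  have e2 : deriv (fun z : ℝ => 48 * α * (z ^ 3 - 3 * c₀ * z) / (c₀ + z ^ 2) ^ 3)
      = fun z => 144 * α * (-z ^ 4 + 6 * c₀ * z ^ 2 - c₀ ^ 2) / (c₀ + z ^ 2) ^ 4 :=
    funext fun z => (hd2 hc₀ z).deriv
  have e3 : deriv (fun z : ℝ => 144 * α * (-z ^ 4 + 6 * c₀ * z ^ 2 - c₀ ^ 2) / (c₀ + z ^ 2) ^ 4)
      = fun z => 576 * α * (z ^ 5 - 10 * c₀ * z ^ 3 + 5 * c₀ ^ 2 * z) / (c₀ + z ^ 2) ^ 5 :=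
    funext fun z => (hd3 hc₀ z).deriv
  have i2 : iteratedDeriv 2 (fun z : ℝ => 24 * α * z / (c₀ + z ^ 2)) ζ
      = 48 * α * (ζ ^ 3 - 3 * c₀ * ζ) / (c₀ + ζ ^ 2) ^ 3 := by
    simp only [iteratedDeriv_succ, iteratedDeriv_zero, e0, e1]
  have i4 : iteratedDeriv 4 (fun z : ℝ => 24 * α * z / (c₀ + z ^ 2)) ζ
      = 576 * α * (ζ ^ 5 - 10 * c₀ * ζ ^ 3 + 5 * c₀ ^ 2 * ζ) / (c₀ + ζ ^ 2) ^ 5 := by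
    simp only [iteratedDeriv_succ, iteratedDeriv_zero, e0, e1, e2, e3]
  rw [i2, i4, e0]
  have hs0 : c₀ + ζ ^ 2 ≠ 0 := by positivity
  field_simp
  ring
end

section
/- Let α, β be real constants, let h₁ : ℝ → ℝ be smooth, and let v : ℝ×ℝ → ℝ be a smooth solution of the forced Ostrovsky potential equation v_tx + v_x v_xx + α v_xxxx − β v − h₁(x) = 0 (time-independent forcing). Define the energy density T(x,t) = (1/2)α v_xx² − (1/6) v_x³ − (1/2)β v² − h₁(x) v and the flux Φ(x,t) = α v_t v_xxx − α v_tx v_xx + (1/2) v_t v_x² + (1/2) v_t². Then the local conservation law ∂t T + ∂x Φ = 0 holds identically on ℝ×ℝ. -/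
section infra
variable {u : ℝ → ℝ → ℝ}

lemma hasDerivAt_x (hu : Smooth2 u) (x t : ℝ) :
    HasDerivAt (fun y => u y t) ((fderiv ℝ (fun p : ℝ × ℝ => u p.1 p.2) (x, t)) (1, 0)) x := by
  have h1 : HasDerivAt (fun y : ℝ => (y, t)) ((1 : ℝ), (0 : ℝ)) x :=
    (hasDerivAt_id x).prodMk (hasDerivAt_const x t)
  exact ((hu.differentiable (by simp) (x, t)).hasFDerivAt.comp_hasDerivAt x h1)

lemma hasDerivAt_t (hu : Smooth2 u) (x t : ℝ) :
    HasDerivAt (fun s => u x s) ((fderiv ℝ (fun p : ℝ × ℝ => u p.1 p.2) (x, t)) (0, 1)) t := by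
  have h1 : HasDerivAt (fun s : ℝ => (x, s)) ((0 : ℝ), (1 : ℝ)) t :=
    (hasDerivAt_const t x).prodMk (hasDerivAt_id t)
  exact ((hu.differentiable (by simp) (x, t)).hasFDerivAt.comp_hasDerivAt t h1)

lemma px_eq (hu : Smooth2 u) (x t : ℝ) :
    px u x t = (fderiv ℝ (fun p : ℝ × ℝ => u p.1 p.2) (x, t)) (1, 0) :=
  (hasDerivAt_x hu x t).deriv

lemma pt_eq (hu : Smooth2 u) (x t : ℝ) :
    pt u x t = (fderiv ℝ (fun p : ℝ × ℝ => u p.1 p.2) (x, t)) (0, 1) :=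
  (hasDerivAt_t hu x t).deriv

lemma smooth_px (hu : Smooth2 u) : Smooth2 (px u) := by
  have h : ContDiff ℝ (⊤ : ℕ∞) (fun p : ℝ × ℝ => (fderiv ℝ (fun q : ℝ × ℝ => u q.1 q.2) p) (1, 0)) :=
    (hu.fderiv_right (by simp)).clm_apply contDiff_const
  have : (fun p : ℝ × ℝ => px u p.1 p.2)
      = fun p : ℝ × ℝ => (fderiv ℝ (fun q : ℝ × ℝ => u q.1 q.2) p) (1, 0) := by
    funext p; exact px_eq hu p.1 p.2
  rw [Smooth2, this]; exact h

lemma smooth_pt (hu : Smooth2 u) : Smooth2 (pt u) := by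
  have h : ContDiff ℝ (⊤ : ℕ∞) (fun p : ℝ × ℝ => (fderiv ℝ (fun q : ℝ × ℝ => u q.1 q.2) p) (0, 1)) :=
    (hu.fderiv_right (by simp)).clm_apply contDiff_const
  have : (fun p : ℝ × ℝ => pt u p.1 p.2)
      = fun p : ℝ × ℝ => (fderiv ℝ (fun q : ℝ × ℝ => u q.1 q.2) p) (0, 1) := by
    funext p; exact pt_eq hu p.1 p.2
  rw [Smooth2, this]; exact h

-- derivative of directional-derivative function
lemma hasDeriv_dir (hu : Smooth2 u) (w : ℝ × ℝ) :
    ∀ p : ℝ × ℝ, ∀ d : ℝ × ℝ,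
      HasFDerivAt (fun q : ℝ × ℝ => (fderiv ℝ (fun q : ℝ × ℝ => u q.1 q.2) q) w)
        (((fderiv ℝ (fderiv ℝ (fun q : ℝ × ℝ => u q.1 q.2)) p).flip) w) p := by
  intro p d
  set U := fun q : ℝ × ℝ => u q.1 q.2
  have hdf : DifferentiableAt ℝ (fderiv ℝ U) p :=
    ((hu.fderiv_right (m := (⊤ : ℕ∞)) (by simp)).differentiable (by simp) p)
  have := hdf.hasFDerivAt.clm_apply (hasFDerivAt_const w p)
  simpa using this

lemma swap (hu : Smooth2 u) : pt (px u) = px (pt u) := by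
  funext x t
  set U := fun q : ℝ × ℝ => u q.1 q.2 with hU
  have hsym : IsSymmSndFDerivAt ℝ U (x, t) :=
    (hu.contDiffAt).isSymmSndFDerivAt (by rw [minSmoothness_of_isRCLikeNormedField]; exact (WithTop.coe_le_coe.mpr (le_top : (2 : ℕ∞) ≤ ⊤) : ((2 : ℕ∞) : WithTop ℕ∞) ≤ ((⊤ : ℕ∞) : WithTop ℕ∞)))
  -- pt (px u) x t
  have h1 : HasDerivAt (fun s => px u x s)
      ((fderiv ℝ (fderiv ℝ U) (x, t)) ((0 : ℝ), (1 : ℝ)) (1, 0)) t := by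
    have hF := hasDeriv_dir hu ((1 : ℝ), (0 : ℝ)) (x, t) (0, 1)
    have h2 : HasDerivAt (fun s : ℝ => (x, s)) ((0 : ℝ), (1 : ℝ)) t :=
      (hasDerivAt_const t x).prodMk (hasDerivAt_id t)
    have h3 := hF.comp_hasDerivAt t h2
    have heq : (fun s => px u x s) = fun s => (fderiv ℝ U (x, s)) (1, 0) := by
      funext s; exact px_eq hu x s
    rw [heq]; simpa [Function.comp_def] using h3
  have h4 : HasDerivAt (fun y => pt u y t)
      ((fderiv ℝ (fderiv ℝ U) (x, t)) ((1 : ℝ), (0 : ℝ)) (0, 1)) x := by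
    have hF := hasDeriv_dir hu ((0 : ℝ), (1 : ℝ)) (x, t) (1, 0)
    have h2 : HasDerivAt (fun y : ℝ => (y, t)) ((1 : ℝ), (0 : ℝ)) x :=
      (hasDerivAt_id x).prodMk (hasDerivAt_const x t)
    have h3 := hF.comp_hasDerivAt x h2
    have heq : (fun y => pt u y t) = fun y => (fderiv ℝ U (y, t)) (0, 1) := by
      funext y; exact pt_eq hu y t
    rw [heq]; simpa [Function.comp_def] using h3
  show deriv (fun s => px u x s) t = deriv (fun y => pt u y t) x
  rw [h1.deriv, h4.deriv, hsym.eq]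
end infra

lemma hdt {u : ℝ → ℝ → ℝ} (hu : Smooth2 u) (x t : ℝ) :
    HasDerivAt (fun s => u x s) (pt u x t) t := by
  rw [pt_eq hu]; exact hasDerivAt_t hu x t

lemma hdx {u : ℝ → ℝ → ℝ} (hu : Smooth2 u) (x t : ℝ) :
    HasDerivAt (fun y => u y t) (px u x t) x := by
  rw [px_eq hu]; exact hasDerivAt_x hu x t

/-- Energy conservation law for the forced Ostrovsky potential equation with
time-independent forcing `h₁(x)`: for every smooth solution `v`, the density
`T = (1/2)α v_xx² − (1/6)v_x³ − (1/2)β v² − h₁(x) v` and flux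
`Φ = α v_t v_xxx − α v_tx v_xx + (1/2)v_t v_x² + (1/2)v_t²`
satisfy the continuity equation `∂t T + ∂x Φ = 0` identically. -/
theorem energy_conservation_law
    (α β : ℝ) (h₁ : ℝ → ℝ) (hh₁ : ContDiff ℝ (⊤ : ℕ∞) h₁)
    (v : ℝ → ℝ → ℝ) (hv : Smooth2 v)
    (hsol : ∀ x t : ℝ,
      px (pt v) x t + px v x t * px (px v) x t + α * px (px (px (px v))) x t
        - β * v x t - h₁ x = 0) :
    ∀ x t : ℝ,
      pt (fun x t => 1 / 2 * α * (px (px v) x t) ^ 2 - 1 / 6 * (px v x t) ^ 3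
          - 1 / 2 * β * (v x t) ^ 2 - h₁ x * v x t) x t
      + px (fun x t => α * pt v x t * px (px (px v)) x t
          - α * px (pt v) x t * px (px v) x t
          + 1 / 2 * pt v x t * (px v x t) ^ 2 + 1 / 2 * (pt v x t) ^ 2) x t = 0 := by
  intro x t
  have hvx : Smooth2 (px v) := smooth_px hv
  have hvxx : Smooth2 (px (px v)) := smooth_px hvx
  have hvxxx : Smooth2 (px (px (px v))) := smooth_px hvxx
  have hvt : Smooth2 (pt v) := smooth_pt hv
  have hvtx : Smooth2 (px (pt v)) := smooth_px hvt
  -- time derivative of the density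
  have hT : HasDerivAt
      (fun s => 1 / 2 * α * (px (px v) x s) ^ 2 - 1 / 6 * (px v x s) ^ 3
          - 1 / 2 * β * (v x s) ^ 2 - h₁ x * v x s)
      (1 / 2 * α * ((2 : ℕ) * px (px v) x t ^ 1 * pt (px (px v)) x t)
        - 1 / 6 * ((3 : ℕ) * px v x t ^ 2 * pt (px v) x t)
        - 1 / 2 * β * ((2 : ℕ) * v x t ^ 1 * pt v x t)
        - h₁ x * pt v x t) t := by
    exact (((((hdt hvxx x t).pow 2).const_mul (1 / 2 * α)).sub
        (((hdt hvx x t).pow 3).const_mul (1 / 6))).sub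
        (((hdt hv x t).pow 2).const_mul (1 / 2 * β))).sub
        ((hdt hv x t).const_mul (h₁ x))
  -- space derivative of the flux
  have hΦ : HasDerivAt
      (fun y => α * pt v y t * px (px (px v)) y t
          - α * px (pt v) y t * px (px v) y t
          + 1 / 2 * pt v y t * (px v y t) ^ 2 + 1 / 2 * (pt v y t) ^ 2)
      ((α * px (pt v) x t) * px (px (px v)) x t
          + (α * pt v x t) * px (px (px (px v))) x t
        - ((α * px (px (pt v)) x t) * px (px v) x t
          + (α * px (pt v) x t) * px (px (px v)) x t)
        + ((1 / 2 * px (pt v) x t) * px v x t ^ 2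
          + (1 / 2 * pt v x t) * ((2 : ℕ) * px v x t ^ 1 * px (px v) x t))
        + 1 / 2 * ((2 : ℕ) * pt v x t ^ 1 * px (pt v) x t)) x := by
    exact (((((hdx hvt x t).const_mul α).mul (hdx hvxxx x t)).sub
        (((hdx hvtx x t).const_mul α).mul (hdx hvxx x t))).add
        ((((hdx hvt x t).const_mul (1 / 2)).mul ((hdx hvx x t).pow 2)))).add
        (((hdx hvt x t).pow 2).const_mul (1 / 2))
  have e1 : pt (px v) x t = px (pt v) x t := by rw [swap hv]
  have e2 : pt (px (px v)) x t = px (px (pt v)) x t := by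
    rw [swap hvx, congrArg px (swap hv)]
  have goal : deriv (fun s => 1 / 2 * α * (px (px v) x s) ^ 2 - 1 / 6 * (px v x s) ^ 3
          - 1 / 2 * β * (v x s) ^ 2 - h₁ x * v x s) t
      + deriv (fun y => α * pt v y t * px (px (px v)) y t
          - α * px (pt v) y t * px (px v) y t
          + 1 / 2 * pt v y t * (px v y t) ^ 2 + 1 / 2 * (pt v y t) ^ 2) x = 0 := by
    rw [hT.deriv, hΦ.deriv, e1, e2]
    push_cast
    linear_combination (pt v x t) * hsol x t
  exact goal
end

section
/- Let α, β be real constants and c₀ a real constant. Then the function V(ζ) = 12α c₀ tanh(c₀ζ) satisfies α V''''(ζ) + V'(ζ) V''(ζ) − β V(ζ) = −12α c₀ (8α c₀⁴ + β) tanh(c₀ζ) + 96α² c₀⁵ tanh³(c₀ζ) for all ζ ∈ ℝ. Consequently V solves the reduced travelling-wave ODE α V'''' + V' V'' − β V = h₁ with the kink-shaped forcing h₁(ζ) = a₁ tanh(c₀ζ) + a₃ tanh³(c₀ζ) where a₁ = −12α c₀(8α c₀⁴ + β) and a₃ = 96 c₀⁵ α². -/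
private lemma hasDerivAt_tanh (x : ℝ) :
    HasDerivAt Real.tanh (1 - Real.tanh x ^ 2) x := by
  have h := (Real.hasDerivAt_sinh x).div (Real.hasDerivAt_cosh x) (Real.cosh_pos x).ne'
  have heq : (Real.cosh x * Real.cosh x - Real.sinh x * Real.sinh x) / Real.cosh x ^ 2
      = 1 - Real.tanh x ^ 2 := by
    rw [Real.tanh_eq_sinh_div_cosh]
    have hc := (Real.cosh_pos x).ne'
    have hid := Real.cosh_sq_sub_sinh_sq x
    field_simp
  have hfun : (Real.sinh / Real.cosh) = Real.tanh := by
    funext y; rw [Pi.div_apply, Real.tanh_eq_sinh_div_cosh]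
  rw [heq, hfun] at h
  exact h

private lemma hT (c₀ x : ℝ) :
    HasDerivAt (fun z => Real.tanh (c₀ * z)) (c₀ * (1 - Real.tanh (c₀ * x) ^ 2)) x := by
  have := (hasDerivAt_tanh (c₀ * x)).comp x ((hasDerivAt_id x).const_mul c₀)
  exact this.congr_deriv (by ring)

/-- The kink `V(ζ) = 12α c₀ tanh(c₀ζ)` satisfies the reduced travelling-wave ODE
`α V'''' + V' V'' − β V = −12α c₀(8α c₀⁴ + β) tanh(c₀ζ) + 96α² c₀⁵ tanh³(c₀ζ)`. -/
theorem tanh_solution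
    (α β c₀ : ℝ) :
    ∀ ζ : ℝ,
      α * iteratedDeriv 4 (fun z => 12 * α * c₀ * Real.tanh (c₀ * z)) ζ
        + deriv (fun z => 12 * α * c₀ * Real.tanh (c₀ * z)) ζ
          * iteratedDeriv 2 (fun z => 12 * α * c₀ * Real.tanh (c₀ * z)) ζ
        - β * (12 * α * c₀ * Real.tanh (c₀ * ζ))
      = -12 * α * c₀ * (8 * α * c₀ ^ 4 + β) * Real.tanh (c₀ * ζ)
          + 96 * α ^ 2 * c₀ ^ 5 * (Real.tanh (c₀ * ζ)) ^ 3 := by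
  intro ζ
  set V : ℝ → ℝ := fun z => 12 * α * c₀ * Real.tanh (c₀ * z) with hV
  set t : ℝ → ℝ := fun z => Real.tanh (c₀ * z) with ht
  -- derivative chain
  have hD1 : ∀ x, HasDerivAt V (12 * α * c₀ ^ 2 * (1 - t x ^ 2)) x := by
    intro x
    have := (hT c₀ x).const_mul (12 * α * c₀)
    exact this.congr_deriv (by simp only [ht]; ring)
  have hd1 : deriv V = fun x => 12 * α * c₀ ^ 2 * (1 - t x ^ 2) :=
    funext fun x => (hD1 x).deriv
  have hD2 : ∀ x, HasDerivAt (fun y => 12 * α * c₀ ^ 2 * (1 - t y ^ 2))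
      (-24 * α * c₀ ^ 3 * (t x - t x ^ 3)) x := by
    intro x
    have h1 : HasDerivAt (fun y => 1 - t y ^ 2)
        (0 - 2 * t x ^ 1 * (c₀ * (1 - t x ^ 2))) x :=
      (hasDerivAt_const x (1 : ℝ)).sub ((hT c₀ x).pow 2)
    have := h1.const_mul (12 * α * c₀ ^ 2)
    exact this.congr_deriv (by ring)
  have hd2 : deriv (deriv V) = fun x => -24 * α * c₀ ^ 3 * (t x - t x ^ 3) := by
    rw [hd1]; exact funext fun x => (hD2 x).deriv
  have hD3 : ∀ x, HasDerivAt (fun y => -24 * α * c₀ ^ 3 * (t y - t y ^ 3))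
      (-24 * α * c₀ ^ 4 * (1 - 4 * t x ^ 2 + 3 * t x ^ 4)) x := by
    intro x
    have h1 : HasDerivAt (fun y => t y - t y ^ 3)
        (c₀ * (1 - t x ^ 2) - 3 * t x ^ 2 * (c₀ * (1 - t x ^ 2))) x :=
      (hT c₀ x).sub ((hT c₀ x).pow 3)
    have := h1.const_mul (-24 * α * c₀ ^ 3)
    exact this.congr_deriv (by ring)
  have hd3 : deriv (deriv (deriv V))
      = fun x => -24 * α * c₀ ^ 4 * (1 - 4 * t x ^ 2 + 3 * t x ^ 4) := by
    rw [hd2]; exact funext fun x => (hD3 x).deriv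
  have hD4 : ∀ x, HasDerivAt (fun y => -24 * α * c₀ ^ 4 * (1 - 4 * t y ^ 2 + 3 * t y ^ 4))
      (-24 * α * c₀ ^ 5 * (1 - t x ^ 2) * (-8 * t x + 12 * t x ^ 3)) x := by
    intro x
    have h1 : HasDerivAt (fun y => 1 - 4 * t y ^ 2 + 3 * t y ^ 4)
        (0 - 4 * (2 * t x ^ 1 * (c₀ * (1 - t x ^ 2)))
          + 3 * (4 * t x ^ 3 * (c₀ * (1 - t x ^ 2)))) x :=
      (((hasDerivAt_const x (1 : ℝ)).sub (((hT c₀ x).pow 2).const_mul 4)).add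
        (((hT c₀ x).pow 4).const_mul 3))
    have := h1.const_mul (-24 * α * c₀ ^ 4)
    exact this.congr_deriv (by ring)
  have hd4 : deriv (deriv (deriv (deriv V)))
      = fun x => -24 * α * c₀ ^ 5 * (1 - t x ^ 2) * (-8 * t x + 12 * t x ^ 3) := by
    rw [hd3]; exact funext fun x => (hD4 x).deriv
  have hi2 : iteratedDeriv 2 V ζ = -24 * α * c₀ ^ 3 * (t ζ - t ζ ^ 3) := by
    rw [iteratedDeriv_succ, iteratedDeriv_one, hd2]
  have hi4 : iteratedDeriv 4 V ζ
      = -24 * α * c₀ ^ 5 * (1 - t ζ ^ 2) * (-8 * t ζ + 12 * t ζ ^ 3) := by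
    rw [show (4 : ℕ) = 3 + 1 from rfl, iteratedDeriv_succ,
      show (3 : ℕ) = 2 + 1 from rfl, iteratedDeriv_succ,
      show (2 : ℕ) = 1 + 1 from rfl, iteratedDeriv_succ, iteratedDeriv_one, hd4]
  rw [hi2, hi4, hd1]
  ring
end

section
/- Let α, β be real constants with β/α > 0, let ω = (β/α)^{1/4} > 0, and let c₀, c₁, φ be real constants. Then the function V(ζ) = c₀ + c₁ cos(ωζ + φ) satisfies α V''''(ζ) + V'(ζ) V''(ζ) − β V(ζ) = (1/2) c₁² ω³ sin(2(ωζ + φ)) − β c₀ for all ζ ∈ ℝ. Consequently V solves the reduced travelling-wave ODE α V'''' + V' V'' − β V = h₁ with an oscillatory forcing h₁ that oscillates at twice the frequency ω of the wave; this gives a three-parameter (φ, c₀, c₁) family of oscillatory generalized travelling waves. -/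
open Real

/-- Oscillatory solutions: with `ω = (β/α)^(1/4) > 0`, the function
`V(ζ) = c₀ + c₁ cos(ωζ + φ)` satisfies the reduced travelling-wave ODE
`α V'''' + V' V'' − β V = (1/2) c₁² ω³ sin(2(ωζ + φ)) − β c₀`, giving a
three-parameter (`φ, c₀, c₁`) family of oscillatory generalized travelling waves
whose forcing oscillates at twice the frequency of the wave. -/
theorem oscillatory_solution
    (α β c₀ c₁ φ ω : ℝ) (hβα : β / α > 0)
    (hω : ω = (β / α) ^ ((1 : ℝ) / 4)) :
    ω > 0 ∧
    ∀ ζ : ℝ,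
      α * iteratedDeriv 4 (fun z => c₀ + c₁ * Real.cos (ω * z + φ)) ζ
        + deriv (fun z => c₀ + c₁ * Real.cos (ω * z + φ)) ζ
          * iteratedDeriv 2 (fun z => c₀ + c₁ * Real.cos (ω * z + φ)) ζ
        - β * (c₀ + c₁ * Real.cos (ω * ζ + φ))
      = 1 / 2 * c₁ ^ 2 * ω ^ 3 * Real.sin (2 * (ω * ζ + φ)) - β * c₀ := by
  have hωpos : ω > 0 := hω ▸ Real.rpow_pos_of_pos hβα _
  have hα : α ≠ 0 := by
    rintro rfl; simp at hβα
  have hω4 : α * ω ^ 4 = β := by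
    have : ω ^ 4 = β / α := by
      rw [hω, ← Real.rpow_natCast _ 4, ← Real.rpow_mul hβα.le]
      norm_num
    rw [this]; field_simp
  refine ⟨hωpos, fun ζ => ?_⟩
  have hlin : ∀ z : ℝ, HasDerivAt (fun z : ℝ => ω * z + φ) ω z := fun z => by
    simpa using ((hasDerivAt_id z).const_mul ω).add_const φ
  have h1 : ∀ (a b : ℝ) (z : ℝ), HasDerivAt (fun z => a + b * Real.cos (ω * z + φ))
      (-(b * ω) * Real.sin (ω * z + φ)) z := by
    intro a b z
    have := (((Real.hasDerivAt_cos (ω * z + φ)).comp z (hlin z)).const_mul b).const_add a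
    exact this.congr_deriv (by ring)
  have h2 : ∀ (a b : ℝ) (z : ℝ), HasDerivAt (fun z => a + b * Real.sin (ω * z + φ))
      ((b * ω) * Real.cos (ω * z + φ)) z := by
    intro a b z
    have := (((Real.hasDerivAt_sin (ω * z + φ)).comp z (hlin z)).const_mul b).const_add a
    exact this.congr_deriv (by ring)
  have d1 : deriv (fun z => c₀ + c₁ * Real.cos (ω * z + φ))
      = fun z => 0 + (-(c₁ * ω)) * Real.sin (ω * z + φ) := by
    funext z; simpa using (h1 c₀ c₁ z).deriv
  have d2 : iteratedDeriv 2 (fun z => c₀ + c₁ * Real.cos (ω * z + φ))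
      = fun z => 0 + (-(c₁ * ω ^ 2)) * Real.cos (ω * z + φ) := by
    rw [iteratedDeriv_succ, iteratedDeriv_one, d1]
    funext z
    have := (h2 0 (-(c₁ * ω)) z).deriv
    rw [this]; ring
  have d3 : iteratedDeriv 3 (fun z => c₀ + c₁ * Real.cos (ω * z + φ))
      = fun z => 0 + (c₁ * ω ^ 3) * Real.sin (ω * z + φ) := by
    rw [iteratedDeriv_succ, d2]
    funext z
    have := (h1 0 (-(c₁ * ω ^ 2)) z).deriv
    rw [this]; ring
  have d4 : iteratedDeriv 4 (fun z => c₀ + c₁ * Real.cos (ω * z + φ))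
      = fun z => (c₁ * ω ^ 4) * Real.cos (ω * z + φ) := by
    rw [iteratedDeriv_succ, d3]
    funext z
    have := (h2 0 (c₁ * ω ^ 3) z).deriv
    rw [this]; ring
  rw [d1, d2, d4, Real.sin_two_mul]
  simp only []
  linear_combination (Real.cos (ω * ζ + φ) * c₁) * hω4
end

section
/- Let α be a real constant, β a nonzero real constant, μ, c₂ ∈ ℝ, and let h̃₁, h̃₀ : ℝ → ℝ be smooth. Define the speed c̃(t) = μ − h̃₁(t)/β, let C̃ be an antiderivative of c̃, and set ζ = x − C̃(t). Then u(x,t) = c̃(t) + (β/6)ζ² + 2c₂ ζ + 3(4c₂² − βμ)/(2β) is an exact solution of the forced Ostrovsky equation ∂x(u_t + u u_x + α u_xxx) = β u + ∂x h with linear forcing h(x,t) = h̃₁(t) x + h̃₀(t). This is a one-parameter (c₂) family of quadratic polynomial generalized travelling waves, whose profile is stationary in a reference frame moving with the time-dependent speed c̃(t). -/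
/-- One-parameter (`c₂`) family of quadratic polynomial generalized travelling waves:
with speed `c̃(t) = μ − h̃₁(t)/β` and `C̃' = c̃`, the function
`u = c̃(t) + (β/6)ζ² + 2c₂ζ + 3(4c₂² − βμ)/(2β)` with `ζ = x − C̃(t)` is an exact
solution of the forced Ostrovsky equation with linear forcing `h = h̃₁(t)x + h̃₀(t)`. -/
theorem quadratic_generalized_travelling_wave
    (α β μ c₂ : ℝ) (hβ : β ≠ 0)
    (h₁ h₀ : ℝ → ℝ) (hh₁ : ContDiff ℝ (⊤ : ℕ∞) h₁) (hh₀ : ContDiff ℝ (⊤ : ℕ∞) h₀)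
    (c C : ℝ → ℝ)
    (hc : ∀ t : ℝ, c t = μ - h₁ t / β)
    (hC : ∀ t : ℝ, HasDerivAt C (c t) t)
    (h : ℝ → ℝ → ℝ)
    (hdef : ∀ x t : ℝ, h x t = h₁ t * x + h₀ t) :
    SolvesForcedOstrovsky α β h
      (fun x t => c t + β / 6 * (x - C t) ^ 2 + 2 * c₂ * (x - C t)
        + 3 * (4 * c₂ ^ 2 - β * μ) / (2 * β)) := by
  set K : ℝ := 3 * (4 * c₂ ^ 2 - β * μ) / (2 * β) with hK
  set U : ℝ → ℝ → ℝ :=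
    (fun x t => c t + β / 6 * (x - C t) ^ 2 + 2 * c₂ * (x - C t) + K) with hU
  -- derivative of c
  have hcd : ∀ s : ℝ, HasDerivAt c (-(deriv h₁ s / β)) s := by
    intro s
    have hce : c = fun s => μ - h₁ s / β := funext hc
    rw [hce]
    simpa using (hasDerivAt_const s μ).fun_sub
      (((hh₁.differentiable (by simp) s).hasDerivAt).div_const β)
  -- x-derivative of U (as HasDerivAt)
  have hUx : ∀ (y s : ℝ), HasDerivAt (fun z => U z s) (β / 3 * (y - C s) + 2 * c₂) y := by
    intro y s
    have h1 : HasDerivAt (fun z : ℝ => z - C s) 1 y := (hasDerivAt_id y).sub_const _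
    have h2 : HasDerivAt (fun z : ℝ => (z - C s) ^ 2) (2 * (y - C s)) y := by
      simpa using h1.fun_pow 2
    have h3 := (((h2.const_mul (β / 6)).const_add (c s)).fun_add (h1.const_mul (2 * c₂))).add_const K
    exact h3.congr_deriv (by ring)
  have l1 : ∀ (y s : ℝ), px U y s = β / 3 * (y - C s) + 2 * c₂ := by
    intro y s
    exact (hUx y s).deriv
  have l2 : ∀ (y s : ℝ), px (px U) y s = β / 3 := by
    intro y s
    have he : (fun z => px U z s) = fun z => β / 3 * (z - C s) + 2 * c₂ := by
      funext z; exact l1 z s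
    have hd : HasDerivAt (fun z : ℝ => β / 3 * (z - C s) + 2 * c₂) (β / 3) y := by
      simpa using (((hasDerivAt_id y).sub_const (C s)).const_mul (β / 3)).add_const (2 * c₂)
    show deriv (fun z => px U z s) y = β / 3
    rw [he]
    exact hd.deriv
  have l3 : ∀ (y s : ℝ), px (px (px U)) y s = 0 := by
    intro y s
    have he : (fun z => px (px U) z s) = fun _ : ℝ => β / 3 := by
      funext z; exact l2 z s
    show deriv (fun z => px (px U) z s) y = 0
    rw [he]
    exact deriv_const y _
  -- t-derivative of U
  have l4 : ∀ (y s : ℝ), pt U y s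
      = -(deriv h₁ s / β) - c s * (β / 3 * (y - C s) + 2 * c₂) := by
    intro y s
    have h1 : HasDerivAt (fun r : ℝ => y - C r) (-(c s)) s := (hC s).const_sub y
    have h2 : HasDerivAt (fun r : ℝ => (y - C r) ^ 2) (2 * (y - C s) * -(c s)) s := by
      simpa using h1.fun_pow 2
    have h3 := (((hcd s).fun_add (h2.const_mul (β / 6))).fun_add (h1.const_mul (2 * c₂))).add_const K
    have h4 : HasDerivAt (fun r => U y r)
        (-(deriv h₁ s / β) - c s * (β / 3 * (y - C s) + 2 * c₂)) s := by
      exact h3.congr_deriv (by ring)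
    exact h4.deriv
  -- the x-derivative of forcing
  have lh : ∀ (y s : ℝ), px h y s = h₁ s := by
    intro y s
    have he : (fun z => h z s) = fun z => h₁ s * z + h₀ s := by
      funext z; exact hdef z s
    show deriv (fun z => h z s) y = h₁ s
    rw [he]
    simpa using ((hasDerivAt_id y).const_mul (h₁ s)).add_const (h₀ s) |>.deriv
  intro x t
  have hfun : (fun y => pt U y t + U y t * px U y t + α * px (px (px U)) y t)
      = fun y => (-(deriv h₁ t / β) - c t * (β / 3 * (y - C t) + 2 * c₂))
          + U y t * (β / 3 * (y - C t) + 2 * c₂) + α * 0 := by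
    funext y
    rw [l4, l1, l3]
  have hP : HasDerivAt (fun y : ℝ => β / 3 * (y - C t) + 2 * c₂) (β / 3) x := by
    simpa using (((hasDerivAt_id x).sub_const (C t)).const_mul (β / 3)).add_const (2 * c₂)
  have hD : HasDerivAt
      (fun y => (-(deriv h₁ t / β) - c t * (β / 3 * (y - C t) + 2 * c₂))
          + U y t * (β / 3 * (y - C t) + 2 * c₂) + α * 0)
      (-(c t * (β / 3))
        + ((β / 3 * (x - C t) + 2 * c₂) * (β / 3 * (x - C t) + 2 * c₂)
            + U x t * (β / 3))) x := by
    have hA : HasDerivAt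
        (fun y : ℝ => -(deriv h₁ t / β) - c t * (β / 3 * (y - C t) + 2 * c₂))
        (-(c t * (β / 3))) x := by
      simpa using (hP.const_mul (c t)).const_sub (-(deriv h₁ t / β))
    have h5 := (hA.fun_add ((hUx x t).fun_mul hP)).add_const (α * 0)
    convert h5 using 1
  show deriv (fun y => pt U y t + U y t * px U y t + α * px (px (px U)) y t) x
      = β * U x t + px h x t
  rw [hfun, hD.deriv, lh]
  simp only [hU, hK, hc]
  field_simp
  ring
end

section
/- Let α, β, μ be real constants and let V : ℝ → ℝ be a smooth solution of the travelling-wave ODE α V'''' + (V' − μ) V'' − β V = 0. Then the quantity Ψ(ζ) = α( V'(ζ) V'''(ζ) − (1/2) V''(ζ)² ) + (1/3) V'(ζ)³ − (μ/2) V'(ζ)² − (β/2) V(ζ)² is a first integral: Ψ is constant on ℝ, since Ψ'(ζ) = V'(ζ)·(α V''''(ζ) + (V'(ζ) − μ) V''(ζ) − β V(ζ)) = 0. -/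
/-- First integral of the travelling-wave ODE `α V'''' + (V' − μ)V'' − β V = 0`:
the quantity `Ψ = α(V' V''' − (1/2)V''²) + (1/3)V'³ − (μ/2)V'² − (β/2)V²`
is constant along every smooth solution. -/
theorem travelling_wave_first_integral
    (α β μ : ℝ) (V : ℝ → ℝ) (hV : ContDiff ℝ (⊤ : ℕ∞) V)
    (hODE : ∀ ζ : ℝ,
      α * iteratedDeriv 4 V ζ + (deriv V ζ - μ) * iteratedDeriv 2 V ζ - β * V ζ = 0) :
    ∃ k : ℝ, ∀ ζ : ℝ,
      α * (deriv V ζ * iteratedDeriv 3 V ζ - 1 / 2 * (iteratedDeriv 2 V ζ) ^ 2)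
        + 1 / 3 * (deriv V ζ) ^ 3 - μ / 2 * (deriv V ζ) ^ 2 - β / 2 * (V ζ) ^ 2 = k := by
  set Ψ : ℝ → ℝ := fun ζ =>
      α * (deriv V ζ * iteratedDeriv 3 V ζ - 1 / 2 * (iteratedDeriv 2 V ζ) ^ 2)
        + 1 / 3 * (deriv V ζ) ^ 3 - μ / 2 * (deriv V ζ) ^ 2 - β / 2 * (V ζ) ^ 2 with hΨ
  have hD : ∀ (n : ℕ) (ζ : ℝ),
      HasDerivAt (iteratedDeriv n V) (iteratedDeriv (n + 1) V ζ) ζ := by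
    intro n ζ
    have h1 : DifferentiableAt ℝ (iteratedDeriv n V) ζ :=
      (hV.differentiable_iteratedDeriv n (by exact_mod_cast WithTop.coe_lt_top _)) ζ
    have := h1.hasDerivAt
    rwa [show deriv (iteratedDeriv n V) ζ = iteratedDeriv (n + 1) V ζ by
      rw [iteratedDeriv_succ]] at this
  have hΨ' : ∀ ζ : ℝ, HasDerivAt Ψ 0 ζ := by
    intro ζ
    have h0 := hD 0 ζ
    have h1 := hD 1 ζ
    have h2 := hD 2 ζ
    have h3 := hD 3 ζ
    rw [iteratedDeriv_zero] at h0
    rw [show iteratedDeriv 1 V = deriv V by rw [iteratedDeriv_one]] at h0 h1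
    have key : HasDerivAt Ψ
        (α * (iteratedDeriv 2 V ζ * iteratedDeriv 3 V ζ
            + deriv V ζ * iteratedDeriv 4 V ζ
            - 1 / 2 * (2 * iteratedDeriv 2 V ζ * iteratedDeriv 3 V ζ))
          + 1 / 3 * (3 * (deriv V ζ) ^ 2 * iteratedDeriv 2 V ζ)
          - μ / 2 * (2 * deriv V ζ * iteratedDeriv 2 V ζ)
          - β / 2 * (2 * V ζ * deriv V ζ)) ζ := by
      have hA : HasDerivAt (fun ζ => deriv V ζ * iteratedDeriv 3 V ζ)
          (iteratedDeriv 2 V ζ * iteratedDeriv 3 V ζ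
            + deriv V ζ * iteratedDeriv 4 V ζ) ζ := h1.mul h3
      have hB : HasDerivAt (fun ζ => (iteratedDeriv 2 V ζ) ^ 2)
          (2 * iteratedDeriv 2 V ζ * iteratedDeriv 3 V ζ) ζ := by
        have := h2.fun_pow 2; simpa [mul_comm, mul_assoc, mul_left_comm] using this
      have hC : HasDerivAt (fun ζ => (deriv V ζ) ^ 3)
          (3 * (deriv V ζ) ^ 2 * iteratedDeriv 2 V ζ) ζ := by
        have := h1.fun_pow 3; simpa using this
      have hDq : HasDerivAt (fun ζ => (deriv V ζ) ^ 2)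
          (2 * deriv V ζ * iteratedDeriv 2 V ζ) ζ := by
        have := h1.fun_pow 2; simpa using this
      have hE : HasDerivAt (fun ζ => (V ζ) ^ 2) (2 * V ζ * deriv V ζ) ζ := by
        have := h0.fun_pow 2; simpa using this
      exact ((((hA.sub (hB.const_mul (1 / 2))).const_mul α).add
        (hC.const_mul (1 / 3))).sub (hDq.const_mul (μ / 2))).sub (hE.const_mul (β / 2))
    have hz : α * (iteratedDeriv 2 V ζ * iteratedDeriv 3 V ζ
            + deriv V ζ * iteratedDeriv 4 V ζ
            - 1 / 2 * (2 * iteratedDeriv 2 V ζ * iteratedDeriv 3 V ζ))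
          + 1 / 3 * (3 * (deriv V ζ) ^ 2 * iteratedDeriv 2 V ζ)
          - μ / 2 * (2 * deriv V ζ * iteratedDeriv 2 V ζ)
          - β / 2 * (2 * V ζ * deriv V ζ) = 0 := by
      have h := hODE ζ
      have hr : α * (iteratedDeriv 2 V ζ * iteratedDeriv 3 V ζ
            + deriv V ζ * iteratedDeriv 4 V ζ
            - 1 / 2 * (2 * iteratedDeriv 2 V ζ * iteratedDeriv 3 V ζ))
          + 1 / 3 * (3 * (deriv V ζ) ^ 2 * iteratedDeriv 2 V ζ)
          - μ / 2 * (2 * deriv V ζ * iteratedDeriv 2 V ζ)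
          - β / 2 * (2 * V ζ * deriv V ζ)
          = deriv V ζ * (α * iteratedDeriv 4 V ζ
              + (deriv V ζ - μ) * iteratedDeriv 2 V ζ - β * V ζ) := by ring
      rw [hr, h, mul_zero]
    rwa [hz] at key
  refine ⟨Ψ 0, fun ζ => ?_⟩
  have : Ψ ζ = Ψ 0 := by
    have hconst := is_const_of_deriv_eq_zero (f := Ψ)
      (fun x => (hΨ' x).differentiableAt) (fun x => (hΨ' x).deriv)
    exact hconst ζ 0
  simpa [hΨ] using this
end

section
/- Let α, β be real constants with β ≠ 0, let u : ℝ×ℝ → ℝ be a smooth solution of the forced Ostrovsky equation ∂x(u_t + u u_x + α u_xxx) = β u + ∂x h for a smooth forcing h. Fix t ∈ ℝ and suppose: (i) the function x ↦ u_t(x,t) + u(x,t) u_x(x,t) + α u_xxx(x,t) tends to 0 as x → +∞ and as x → −∞; (ii) h(x,t) tends to finite limits h₊ and h₋ as x → +∞ and x → −∞ respectively; (iii) u(·,t) is integrable on ℝ. Then the total mass satisfies β ∫_ℝ u(x,t) dx = h₋ − h₊, i.e. the integral of u at time t is determined by the jump of the topography h between the two spatial infinities. -/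
open Filter MeasureTheory

lemma hasDerivAt_px (u : ℝ → ℝ → ℝ) (hu : Smooth2 u) (x t : ℝ) :
    HasDerivAt (fun y => u y t) (px u x t) x := by
  have hF := (hu.differentiable (by simp) (x, t)).hasFDerivAt
  have hinner : HasDerivAt (fun y : ℝ => ((y, t) : ℝ × ℝ)) ((1 : ℝ), (0 : ℝ)) x :=
    HasDerivAt.prodMk (hasDerivAt_id x) (hasDerivAt_const x t)
  have h1 : HasDerivAt (fun y => u y t)
      (fderiv ℝ (fun p : ℝ × ℝ => u p.1 p.2) (x, t) (1, 0)) x := by have := hF.comp_hasDerivAt x hinner; exact this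
  have : px u x t = fderiv ℝ (fun p : ℝ × ℝ => u p.1 p.2) (x, t) (1, 0) := h1.deriv
  rw [this]; exact h1

lemma hasDerivAt_pt (u : ℝ → ℝ → ℝ) (hu : Smooth2 u) (x t : ℝ) :
    HasDerivAt (fun s => u x s) (pt u x t) t := by
  have hF := (hu.differentiable (by simp) (x, t)).hasFDerivAt
  have hinner : HasDerivAt (fun s : ℝ => ((x, s) : ℝ × ℝ)) ((0 : ℝ), (1 : ℝ)) t :=
    HasDerivAt.prodMk (hasDerivAt_const t x) (hasDerivAt_id t)
  have h1 : HasDerivAt (fun s => u x s)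
      (fderiv ℝ (fun p : ℝ × ℝ => u p.1 p.2) (x, t) (0, 1)) t := hF.comp_hasDerivAt t hinner
  have : pt u x t = fderiv ℝ (fun p : ℝ × ℝ => u p.1 p.2) (x, t) (0, 1) := h1.deriv
  rw [this]; exact h1

lemma smooth2_fderiv_apply (u : ℝ → ℝ → ℝ) (hu : Smooth2 u) (v : ℝ × ℝ) :
    ContDiff ℝ (⊤ : ℕ∞) (fun p : ℝ × ℝ => fderiv ℝ (fun q : ℝ × ℝ => u q.1 q.2) p v) :=
  (hu.fderiv_right (by simp)).clm_apply contDiff_const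

lemma smooth2_px (u : ℝ → ℝ → ℝ) (hu : Smooth2 u) : Smooth2 (px u) := by
  have : (fun p : ℝ × ℝ => px u p.1 p.2)
      = fun p : ℝ × ℝ => fderiv ℝ (fun q : ℝ × ℝ => u q.1 q.2) p (1, 0) := by
    funext p
    have hF := (hu.differentiable (by simp) (p.1, p.2)).hasFDerivAt
    have hinner : HasDerivAt (fun y : ℝ => ((y, p.2) : ℝ × ℝ)) ((1 : ℝ), (0 : ℝ)) p.1 :=
      HasDerivAt.prodMk (hasDerivAt_id p.1) (hasDerivAt_const p.1 p.2)
    exact (hF.comp_hasDerivAt p.1 hinner).deriv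
  unfold Smooth2
  rw [this]
  exact smooth2_fderiv_apply u hu (1, 0)

lemma smooth2_pt (u : ℝ → ℝ → ℝ) (hu : Smooth2 u) : Smooth2 (pt u) := by
  have : (fun p : ℝ × ℝ => pt u p.1 p.2)
      = fun p : ℝ × ℝ => fderiv ℝ (fun q : ℝ × ℝ => u q.1 q.2) p (0, 1) := by
    funext p
    have hF := (hu.differentiable (by simp) (p.1, p.2)).hasFDerivAt
    have hinner : HasDerivAt (fun s : ℝ => ((p.1, s) : ℝ × ℝ)) ((0 : ℝ), (1 : ℝ)) p.2 :=
      HasDerivAt.prodMk (hasDerivAt_const p.2 p.1) (hasDerivAt_id p.2)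
    exact (hF.comp_hasDerivAt p.2 hinner).deriv
  unfold Smooth2
  rw [this]
  exact smooth2_fderiv_apply u hu (0, 1)

/-- Total mass identity. -/
theorem total_mass_identity
    (α β : ℝ) (hβ : β ≠ 0)
    (h : ℝ → ℝ → ℝ) (hh : Smooth2 h)
    (u : ℝ → ℝ → ℝ) (hu : Smooth2 u)
    (hsol : SolvesForcedOstrovsky α β h u)
    (t : ℝ) (hplus hminus : ℝ)
    (hdecayTop : Tendsto (fun x => pt u x t + u x t * px u x t + α * px (px (px u)) x t)
      atTop (nhds 0))
    (hdecayBot : Tendsto (fun x => pt u x t + u x t * px u x t + α * px (px (px u)) x t)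
      atBot (nhds 0))
    (hhTop : Tendsto (fun x => h x t) atTop (nhds hplus))
    (hhBot : Tendsto (fun x => h x t) atBot (nhds hminus))
    (hint : Integrable (fun x => u x t)) :
    β * ∫ x : ℝ, u x t = hminus - hplus := by
  set Φ : ℝ → ℝ → ℝ := fun x t => pt u x t + u x t * px u x t + α * px (px (px u)) x t with hΦ
  have hΦs : Smooth2 Φ := by
    unfold Smooth2
    exact ((smooth2_pt u hu).add (hu.mul (smooth2_px u hu))).add
      (contDiff_const.mul (smooth2_px _ (smooth2_px _ (smooth2_px u hu))))
  -- the function g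
  set g : ℝ → ℝ := fun x => Φ x t - h x t with hg
  have hderiv : ∀ x : ℝ, HasDerivAt g (β * u x t) x := by
    intro x
    have h1 := hasDerivAt_px Φ hΦs x t
    have h2 := hasDerivAt_px h hh x t
    have := h1.sub h2
    rw [hsol x t] at this
    exact this.congr_deriv (by ring)
  have hgl : Tendsto g atTop (nhds (0 - hplus)) := hdecayTop.sub hhTop
  have hgb : Tendsto g atBot (nhds (0 - hminus)) := hdecayBot.sub hhBot
  have hint' : Integrable (fun x => β * u x t) := hint.const_mul β
  have h1 : ∫ x in Set.Ioi (0:ℝ), β * u x t = (0 - hplus) - g 0 :=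
    MeasureTheory.integral_Ioi_of_hasDerivAt_of_tendsto'
      (fun x _ => hderiv x) hint'.integrableOn hgl
  have h2 : ∫ x in Set.Iic (0:ℝ), β * u x t = g 0 - (0 - hminus) :=
    MeasureTheory.integral_Iic_of_hasDerivAt_of_tendsto'
      (fun x _ => hderiv x) hint'.integrableOn hgb
  have h3 : ∫ x : ℝ, β * u x t = (∫ x in Set.Iic (0:ℝ), β * u x t)
      + ∫ x in Set.Ioi (0:ℝ), β * u x t :=
    (intervalIntegral.integral_Iic_add_Ioi hint'.integrableOn hint'.integrableOn).symm
  have : β * ∫ x : ℝ, u x t = ∫ x : ℝ, β * u x t := (integral_const_mul β _).symm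
  rw [this, h3, h1, h2]; ring
end
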